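/- arXiv:math/0504361 — 4 statements merged into one kernel-verified Lean document; each statement's English description precedes it below -/
import Mathlib

section
/- The large Schröder number r_n equals the sum over noncrossing partitions π of {1,...,n+1} of the product over blocks B of π of c_{|B|-1}, where c_k is the k-th Catalan number (with c_0 = 1). -/
attribute [local instance] Classical.propDecidable

noncomputable section

/-- Two subsets `E`, `F` of `{1,...,n}` are crossing if there exist
`i₁ < j₁ < i₂ < j₂` with `i₁, i₂ ∈ E` and `j₁, j₂ ∈ F`. -/
def Crossing (E F : Finset ℕ) : Prop :=
  ∃ i₁ ∈ E, ∃ i₂ ∈ E, ∃ j₁ ∈ F, ∃ j₂ ∈ F, i₁ < j₁ ∧ j₁ < i₂ ∧ i₂ < j₂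

/-- `i` is the minimum element of `E`. -/
def IsMinOf (i : ℕ) (E : Finset ℕ) : Prop := i ∈ E ∧ ∀ j ∈ E, i ≤ j

/-- `E` and `F` are nearly disjoint. -/
def NearlyDisjoint (E F : Finset ℕ) : Prop :=
  ∀ i ∈ E ∩ F,
    (IsMinOf i E ∧ 1 < E.card ∧ ¬ IsMinOf i F) ∨
    (¬ IsMinOf i E ∧ IsMinOf i F ∧ 1 < F.card)

/-- `π` is a noncrossing linked partition of `{1,...,n}`. -/
def IsNCL (n : ℕ) (π : Finset (Finset ℕ)) : Prop :=
  (∀ E ∈ π, E.Nonempty) ∧ π.biUnion id = Finset.Icc 1 n ∧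
    ∀ E ∈ π, ∀ F ∈ π, E ≠ F → ¬ Crossing E F ∧ NearlyDisjoint E F

/-- `π` is a noncrossing partition of `{1,...,n}`. -/
def IsNC (n : ℕ) (π : Finset (Finset ℕ)) : Prop :=
  (∀ E ∈ π, E.Nonempty) ∧ π.biUnion id = Finset.Icc 1 n ∧
    ∀ E ∈ π, ∀ F ∈ π, E ≠ F → Disjoint E F ∧ ¬ Crossing E F

/-- The order on (linked) partitions: every block of `π` is contained in a block of `σ`. -/
def NCLle (π σ : Finset (Finset ℕ)) : Prop := ∀ E ∈ π, ∃ E' ∈ σ, E ⊆ E'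

/-- The finset of all noncrossing linked partitions of `{1,...,n}`. -/
def NCLset (n : ℕ) : Finset (Finset (Finset ℕ)) :=
  ((Finset.Icc 1 n).powerset.powerset).filter (IsNCL n)

/-- The finset of all noncrossing partitions of `{1,...,n}`. -/
def NCset (n : ℕ) : Finset (Finset (Finset ℕ)) :=
  ((Finset.Icc 1 n).powerset.powerset).filter (IsNC n)

/-- The large Schröder numbers, via the standard Schröder recurrence
`r₀ = 1`, `rₙ₊₁ = rₙ + ∑_{k=0}^{n} r_k r_{n-k}`, equivalent to the
generating function `∑ rₙ wⁿ = (1 - w - √(1 - 6w + w²))/(2w)`. -/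
def schroder : ℕ → ℕ
  | 0 => 1
  | n + 1 =>
      schroder n + ∑ k ∈ (Finset.range (n + 1)).attach,
        schroder k.1 * schroder (n - k.1)
termination_by n => n
decreasing_by
  all_goals first
    | exact Nat.lt_succ_self n
    | (have hk := k.2; simp only [Finset.mem_range] at hk; omega)


namespace SchroderAux
open Finset

/-- general "noncrossing partition of a finite set `S`" predicate -/
def IsNCon (S : Finset ℕ) (π : Finset (Finset ℕ)) : Prop :=
  (∀ E ∈ π, E.Nonempty) ∧ π.biUnion id = S ∧
    ∀ E ∈ π, ∀ F ∈ π, E ≠ F → Disjoint E F ∧ ¬ Crossing E F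

def NCon (S : Finset ℕ) : Finset (Finset (Finset ℕ)) :=
  (S.powerset.powerset).filter (IsNCon S)

noncomputable def W (π : Finset (Finset ℕ)) : ℕ := ∏ B ∈ π, catalan (B.card - 1)

noncomputable def g (S : Finset ℕ) : ℕ := ∑ π ∈ NCon S, W π

lemma mem_NCon {S : Finset ℕ} {π : Finset (Finset ℕ)} :
    π ∈ NCon S ↔ IsNCon S π := by
  constructor
  · intro h; exact (mem_filter.mp h).2
  · intro h
    refine mem_filter.mpr ⟨?_, h⟩
    rw [mem_powerset]
    intro B hB
    rw [mem_powerset]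
    calc B ⊆ π.biUnion id := subset_biUnion_of_mem id hB
    _ = S := h.2.1

lemma NCset_eq (n : ℕ) : NCset n = NCon (Finset.Icc 1 n) := rfl

lemma crossing_mono {E E' F F' : Finset ℕ} (hE : E ⊆ E') (hF : F ⊆ F')
    (h : Crossing E F) : Crossing E' F' := by
  obtain ⟨i₁, h1, i₂, h2, j₁, h3, j₂, h4, h5⟩ := h
  exact ⟨i₁, hE h1, i₂, hE h2, j₁, hF h3, j₂, hF h4, h5⟩

/-- a block not crossing and disjoint from both sides: if `E` lies entirely below `F`,
no crossing. -/
lemma not_crossing_of_below {E F : Finset ℕ} (h : ∀ x ∈ E, ∀ y ∈ F, x < y) :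
    ¬ Crossing E F ∧ ¬ Crossing F E := by
  constructor
  · rintro ⟨i₁, h1, i₂, h2, j₁, h3, j₂, h4, c1, c2, c3⟩
    exact absurd (h i₂ h2 j₁ h3) (by omega)
  · rintro ⟨i₁, h1, i₂, h2, j₁, h3, j₂, h4, c1, c2, c3⟩
    exact absurd (h j₁ h3 i₁ h1) (by omega)

lemma NCon_empty : NCon (∅ : Finset ℕ) = {∅} := by
  ext π
  simp only [mem_NCon, IsNCon, mem_singleton]
  constructor
  · rintro ⟨h1, h2, _⟩
    by_contra hne
    obtain ⟨B, hB⟩ := Finset.nonempty_iff_ne_empty.mpr hne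
    obtain ⟨x, hx⟩ := h1 B hB
    have : x ∈ π.biUnion id := mem_biUnion.mpr ⟨B, hB, hx⟩
    rw [h2] at this; exact absurd this (notMem_empty x)
  · rintro rfl
    exact ⟨by simp, by simp, by simp⟩

lemma g_empty : g (∅ : Finset ℕ) = 1 := by
  rw [g, NCon_empty]; simp [W]

lemma NCon_singleton (x : ℕ) : NCon ({x} : Finset ℕ) = {{{x}}} := by
  ext π
  simp only [mem_NCon, IsNCon, mem_singleton]
  constructor
  · rintro ⟨h1, h2, _⟩
    have hBsub : ∀ B ∈ π, B = {x} := by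
      intro B hB
      obtain ⟨y, hy⟩ := h1 B hB
      have hsub : B ⊆ {x} := by
        intro z hz
        rw [← h2]; exact mem_biUnion.mpr ⟨B, hB, hz⟩
      have : y = x := mem_singleton.mp (hsub hy)
      apply Finset.Subset.antisymm hsub
      intro z hz; rw [mem_singleton] at hz; subst hz; rw [← this]; exact hy
    have hxx : x ∈ π.biUnion id := by rw [h2]; exact mem_singleton_self x
    obtain ⟨B, hB, hxB⟩ := mem_biUnion.mp hxx
    ext C
    simp only [mem_singleton]
    constructor
    · exact fun h => hBsub C h
    · rintro rfl; rw [← hBsub B hB]; exact hB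
  · rintro rfl
    refine ⟨by simp, by simp, ?_⟩
    intro E hE F hF hne
    simp only [mem_singleton] at hE hF; subst hE; subst hF; exact absurd rfl hne

lemma g_singleton (x : ℕ) : g ({x} : Finset ℕ) = 1 := by
  rw [g, NCon_singleton]; simp [W]

end SchroderAux
namespace SchroderAux
open Finset

lemma biUnion_image_image (π : Finset (Finset ℕ)) (f : ℕ → ℕ) :
    (π.image (fun B => B.image f)).biUnion id = (π.biUnion id).image f := by
  ext x
  simp only [mem_biUnion, mem_image, id]
  constructor
  · rintro ⟨B', ⟨B, hB, rfl⟩, hx⟩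
    obtain ⟨y, hy, rfl⟩ := mem_image.mp hx
    exact ⟨y, ⟨B, hB, hy⟩, rfl⟩
  · rintro ⟨y, ⟨B, hB, hy⟩, rfl⟩
    exact ⟨B.image f, ⟨B, hB, rfl⟩, mem_image_of_mem f hy⟩

lemma isNCon_up {S : Finset ℕ} {π : Finset (Finset ℕ)} (h : IsNCon S π) :
    IsNCon (S.image (· + 1)) (π.image (fun B => B.image (· + 1))) := by
  obtain ⟨h1, h2, h3⟩ := h
  refine ⟨?_, ?_, ?_⟩
  · rintro E' hE'
    obtain ⟨B, hB, rfl⟩ := mem_image.mp hE'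
    exact (h1 B hB).image _
  · rw [biUnion_image_image, h2]
  · rintro E' hE' F' hF' hne
    obtain ⟨E, hE, rfl⟩ := mem_image.mp hE'
    obtain ⟨F, hF, rfl⟩ := mem_image.mp hF'
    have hEF : E ≠ F := by rintro rfl; exact hne rfl
    obtain ⟨hd, hc⟩ := h3 E hE F hF hEF
    constructor
    · rw [Finset.disjoint_left]
      rintro x hx hx'
      obtain ⟨y, hy, rfl⟩ := mem_image.mp hx
      obtain ⟨z, hz, hzy⟩ := mem_image.mp hx'
      have : z = y := by omega
      subst this
      exact Finset.disjoint_left.mp hd hy hz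
    · rintro ⟨i₁, h1', i₂, h2', j₁, h3', j₂, h4', c1, c2, c3⟩
      obtain ⟨a₁, ha₁, rfl⟩ := mem_image.mp h1'
      obtain ⟨a₂, ha₂, rfl⟩ := mem_image.mp h2'
      obtain ⟨b₁, hb₁, rfl⟩ := mem_image.mp h3'
      obtain ⟨b₂, hb₂, rfl⟩ := mem_image.mp h4'
      exact hc ⟨a₁, ha₁, a₂, ha₂, b₁, hb₁, b₂, hb₂, by omega, by omega, by omega⟩

lemma isNCon_dn {S : Finset ℕ} {π : Finset (Finset ℕ)} (h : IsNCon S π)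
    (hS : ∀ x ∈ S, 1 ≤ x) :
    IsNCon (S.image (· - 1)) (π.image (fun B => B.image (· - 1))) := by
  obtain ⟨h1, h2, h3⟩ := h
  have hmem : ∀ B ∈ π, ∀ x ∈ B, 1 ≤ x := by
    intro B hB x hx
    exact hS x (h2 ▸ mem_biUnion.mpr ⟨B, hB, hx⟩)
  refine ⟨?_, ?_, ?_⟩
  · rintro E' hE'
    obtain ⟨B, hB, rfl⟩ := mem_image.mp hE'
    exact (h1 B hB).image _
  · rw [biUnion_image_image, h2]
  · rintro E' hE' F' hF' hne
    obtain ⟨E, hE, rfl⟩ := mem_image.mp hE'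
    obtain ⟨F, hF, rfl⟩ := mem_image.mp hF'
    have hEF : E ≠ F := by rintro rfl; exact hne rfl
    obtain ⟨hd, hc⟩ := h3 E hE F hF hEF
    constructor
    · rw [Finset.disjoint_left]
      rintro x hx hx'
      obtain ⟨y, hy, rfl⟩ := mem_image.mp hx
      obtain ⟨z, hz, hzy⟩ := mem_image.mp hx'
      have hy1 := hmem E hE y hy
      have hz1 := hmem F hF z hz
      have : z = y := by omega
      subst this
      exact Finset.disjoint_left.mp hd hy hz
    · rintro ⟨i₁, h1', i₂, h2', j₁, h3', j₂, h4', c1, c2, c3⟩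
      obtain ⟨a₁, ha₁, rfl⟩ := mem_image.mp h1'
      obtain ⟨a₂, ha₂, rfl⟩ := mem_image.mp h2'
      obtain ⟨b₁, hb₁, rfl⟩ := mem_image.mp h3'
      obtain ⟨b₂, hb₂, rfl⟩ := mem_image.mp h4'
      have := hmem E hE a₁ ha₁
      have := hmem E hE a₂ ha₂
      have := hmem F hF b₁ hb₁
      have := hmem F hF b₂ hb₂
      exact hc ⟨a₁, ha₁, a₂, ha₂, b₁, hb₁, b₂, hb₂, by omega, by omega, by omega⟩

lemma up_dn_block {B : Finset ℕ} (hB : ∀ x ∈ B, 1 ≤ x) :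
    (B.image (· - 1)).image (· + 1) = B := by
  ext x
  simp only [mem_image]
  constructor
  · rintro ⟨y, ⟨z, hz, rfl⟩, rfl⟩
    have := hB z hz
    have : z - 1 + 1 = z := by omega
    rw [this]; exact hz
  · intro hx
    exact ⟨x - 1, ⟨x, hx, rfl⟩, by have := hB x hx; omega⟩

lemma dn_up_block (B : Finset ℕ) : (B.image (· + 1)).image (· - 1) = B := by
  ext x
  simp only [mem_image]
  constructor
  · rintro ⟨y, ⟨z, hz, rfl⟩, rfl⟩
    simpa using hz
  · intro hx
    exact ⟨x + 1, ⟨x, hx, rfl⟩, rfl⟩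

lemma card_image_up (B : Finset ℕ) : (B.image (· + 1)).card = B.card :=
  Finset.card_image_of_injective B (fun a b => by omega)

lemma g_shift (a b : ℕ) : g (Finset.Icc (a + 1) (b + 1)) = g (Finset.Icc a b) := by
  have hIcc : (Finset.Icc a b).image (· + 1) = Finset.Icc (a + 1) (b + 1) := by
    simp [Finset.image_add_right_Icc]
  have hIcc' : (Finset.Icc (a+1) (b+1)).image (· - 1) = Finset.Icc a b := by
    ext x
    simp only [mem_image, mem_Icc]
    constructor
    · rintro ⟨y, hy, rfl⟩; omega
    · intro hx; exact ⟨x + 1, by omega, by omega⟩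
  have hge : ∀ x ∈ Finset.Icc (a+1) (b+1), 1 ≤ x := by
    intro x hx; rw [mem_Icc] at hx; omega
  unfold g
  refine Finset.sum_nbij' (fun π => π.image (fun B => B.image (· - 1)))
    (fun π => π.image (fun B => B.image (· + 1))) ?_ ?_ ?_ ?_ ?_
  · intro π hπ
    rw [mem_NCon] at hπ ⊢
    rw [← hIcc']
    exact isNCon_dn hπ hge
  · intro π hπ
    rw [mem_NCon] at hπ ⊢
    rw [← hIcc]
    exact isNCon_up hπ
  · intro π hπ
    rw [mem_NCon] at hπ
    have hmem : ∀ B ∈ π, ∀ x ∈ B, 1 ≤ x := by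
      intro B hB x hx
      exact hge x (hπ.2.1 ▸ mem_biUnion.mpr ⟨B, hB, hx⟩)
    ext B
    simp only [Finset.mem_image]
    constructor
    · rintro ⟨C, hC, rfl⟩
      obtain ⟨D, hD, rfl⟩ := hC
      rw [up_dn_block (hmem D hD)]; exact hD
    · intro hB
      exact ⟨B.image (fun x => x - 1), ⟨B, hB, rfl⟩, up_dn_block (hmem B hB)⟩
  · intro π hπ
    ext B
    simp only [Finset.mem_image]
    constructor
    · rintro ⟨C, hC, rfl⟩
      obtain ⟨D, hD, rfl⟩ := hC
      rw [dn_up_block D]; exact hD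
    · intro hB
      exact ⟨B.image (fun x => x + 1), ⟨B, hB, rfl⟩, dn_up_block B⟩
  · intro π hπ
    rw [mem_NCon] at hπ
    have hmem : ∀ B ∈ π, ∀ x ∈ B, 1 ≤ x := by
      intro B hB x hx
      exact hge x (hπ.2.1 ▸ mem_biUnion.mpr ⟨B, hB, hx⟩)
    unfold W
    rw [Finset.prod_image]
    · apply Finset.prod_congr rfl
      intro B hB
      have hcard : (B.image (fun x => x - 1)).card = B.card :=
        Finset.card_image_of_injOn (fun x hx y hy h => by
          have := hmem B hB x hx; have := hmem B hB y hy; omega)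
      rw [hcard]
    · intro B hB C hC hBC
      rw [← up_dn_block (hmem B hB), ← up_dn_block (hmem C hC)]; exact congrArg (Finset.image (fun x => x + 1)) hBC

lemma g_Icc_shift (t m : ℕ) : g (Finset.Icc (t + 1) (t + m)) = g (Finset.Icc 1 m) := by
  induction t with
  | zero => simp
  | succ t ih =>
    have : t + 1 + 1 = (t + 1) + 1 := rfl
    calc g (Finset.Icc (t + 1 + 1) (t + 1 + m)) = g (Finset.Icc ((t+1)+1) ((t+m)+1)) := by
          ring_nf
    _ = g (Finset.Icc (t+1) (t+m)) := g_shift _ _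
    _ = g (Finset.Icc 1 m) := ih

end SchroderAux
namespace SchroderAux
open Finset

noncomputable def blockOf (π : Finset (Finset ℕ)) (x : ℕ) : Finset ℕ :=
  if h : ∃ B ∈ π, x ∈ B then h.choose else ∅

lemma blockOf_spec {π : Finset (Finset ℕ)} {x : ℕ} (h : ∃ B ∈ π, x ∈ B) :
    blockOf π x ∈ π ∧ x ∈ blockOf π x := by
  rw [blockOf, dif_pos h]
  exact ⟨h.choose_spec.1, h.choose_spec.2⟩

lemma exists_block {S : Finset ℕ} {π : Finset (Finset ℕ)} (h : IsNCon S π) {x : ℕ}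
    (hx : x ∈ S) : ∃ B ∈ π, x ∈ B := by
  rw [← h.2.1] at hx
  exact mem_biUnion.mp hx

lemma block_unique {S : Finset ℕ} {π : Finset (Finset ℕ)} (h : IsNCon S π) {x : ℕ}
    {B : Finset ℕ} (hB : B ∈ π) (hxB : x ∈ B) : B = blockOf π x := by
  have hex : ∃ B ∈ π, x ∈ B := ⟨B, hB, hxB⟩
  obtain ⟨h1, h2⟩ := blockOf_spec hex
  by_contra hne
  exact Finset.disjoint_left.mp (h.2.2 B hB _ h1 hne).1 hxB h2

lemma mem_of_mem_block {S : Finset ℕ} {π : Finset (Finset ℕ)} (h : IsNCon S π)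
    {B : Finset ℕ} (hB : B ∈ π) {x : ℕ} (hx : x ∈ B) : x ∈ S := by
  rw [← h.2.1]; exact mem_biUnion.mpr ⟨B, hB, hx⟩

/-- Separation: any block other than the block `B₁` of the overall minimum `1`
lies entirely below or entirely above any given element `c ∈ B₁`. -/
lemma separation {m : ℕ} {π : Finset (Finset ℕ)} (h : IsNCon (Finset.Icc 1 m) π)
    {B₁ : Finset ℕ} (hB₁ : B₁ ∈ π) (h1 : 1 ∈ B₁) {c : ℕ} (hc : c ∈ B₁)
    {E : Finset ℕ} (hE : E ∈ π) (hne : E ≠ B₁) :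
    (∀ x ∈ E, x < c) ∨ (∀ x ∈ E, c < x) := by
  by_contra hcon
  push_neg at hcon
  obtain ⟨⟨y, hy, hyc⟩, x, hx, hxc⟩ := hcon
  -- x ≤ c ≤ y with x, y ∈ E; c ∉ E so x < c < y
  have hdisj := (h.2.2 E hE B₁ hB₁ hne).1
  have hcE : c ∉ E := fun hcE => Finset.disjoint_left.mp hdisj hcE hc
  have hx1 : 1 ≤ x := by
    have := mem_of_mem_block h hE hx; rw [mem_Icc] at this; omega
  have h1E : (1:ℕ) ∉ E := fun h1E => Finset.disjoint_left.mp hdisj h1E h1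
  have hx2 : 1 < x := by
    rcases Nat.eq_or_lt_of_le hx1 with h' | h'
    · exact absurd hx (h' ▸ h1E)
    · exact h'
  have hxne : x ≠ c := fun h => hcE (h ▸ hx)
  have hyne : y ≠ c := fun h => hcE (h ▸ hy)
  have hcross : Crossing B₁ E := ⟨1, h1, c, hc, x, hx, y, hy, by omega, by omega, by omega⟩
  exact (h.2.2 B₁ hB₁ E hE (Ne.symm hne)).2 hcross

/-- L1: partitions of `[1,m]` having `{1}` as a block, vs partitions of `[2,m]`. -/
lemma sum_singleton_case (m : ℕ) (hm : 1 ≤ m) :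
    ∑ π ∈ (NCon (Finset.Icc 1 m)).filter (fun π => {1} ∈ π), W π
      = g (Finset.Icc 2 m) := by
  unfold g
  refine Finset.sum_nbij' (fun π => π.erase {1}) (fun σ => insert {1} σ) ?_ ?_ ?_ ?_ ?_
  · intro π hπ
    rw [mem_filter, mem_NCon] at hπ
    obtain ⟨⟨h1, h2, h3⟩, hone⟩ := hπ
    rw [mem_NCon]
    refine ⟨fun E hE => h1 E (mem_of_mem_erase hE), ?_, ?_⟩
    · ext x
      simp only [mem_biUnion, mem_erase, id, mem_Icc]
      constructor
      · rintro ⟨B, ⟨hBne, hB⟩, hx⟩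
        have hxm : x ∈ Finset.Icc 1 m := by
          rw [← h2]; exact mem_biUnion.mpr ⟨B, hB, hx⟩
        rw [mem_Icc] at hxm
        have : x ≠ 1 := by
          rintro rfl
          have hd := (h3 B hB {1} hone hBne).1
          exact Finset.disjoint_left.mp hd hx (mem_singleton_self 1)
        omega
      · rintro ⟨hx2, hxm⟩
        have : x ∈ π.biUnion id := by rw [h2]; rw [mem_Icc]; omega
        obtain ⟨B, hB, hx⟩ := mem_biUnion.mp this
        refine ⟨B, ⟨?_, hB⟩, hx⟩
        rintro rfl
        simp only [id_eq, mem_singleton] at hx; omega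
    · intro E hE F hF hne
      exact h3 E (mem_of_mem_erase hE) F (mem_of_mem_erase hF) hne
  · intro σ hσ
    rw [mem_NCon] at hσ
    obtain ⟨h1, h2, h3⟩ := hσ
    have h1mem : ∀ B ∈ σ, ∀ x ∈ B, 2 ≤ x ∧ x ≤ m := by
      intro B hB x hx
      have : x ∈ Finset.Icc 2 m := by rw [← h2]; exact mem_biUnion.mpr ⟨B, hB, hx⟩
      rw [mem_Icc] at this; exact this
    have hnotmem : ({1} : Finset ℕ) ∉ σ := by
      intro hmem
      have := (h1mem _ hmem 1 (mem_singleton_self 1)).1; omega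
    rw [mem_filter, mem_NCon]
    refine ⟨⟨?_, ?_, ?_⟩, mem_insert_self _ _⟩
    · intro E hE
      rcases mem_insert.mp hE with rfl | hE
      · exact ⟨1, mem_singleton_self 1⟩
      · exact h1 E hE
    · rw [Finset.biUnion_insert, h2]
      ext x; simp only [mem_union, mem_singleton, mem_Icc, id]
      omega
    · intro E hE F hF hne
      rcases mem_insert.mp hE with rfl | hE' <;> rcases mem_insert.mp hF with rfl | hF'
      · exact absurd rfl hne
      · constructor
        · rw [Finset.disjoint_left]
          intro x hx
          rw [mem_singleton] at hx; subst hx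
          intro h1F
          exact absurd (h1mem F hF' 1 h1F).1 (by omega)
        · rintro ⟨i₁, hi₁, i₂, hi₂, j₁, hj₁, j₂, hj₂, c1, c2, c3⟩
          rw [mem_singleton] at hi₁ hi₂; omega
      · constructor
        · rw [Finset.disjoint_left]
          intro x hx h1x
          rw [mem_singleton] at h1x; subst h1x
          exact absurd (h1mem E hE' 1 hx).1 (by omega)
        · rintro ⟨i₁, hi₁, i₂, hi₂, j₁, hj₁, j₂, hj₂, c1, c2, c3⟩
          rw [mem_singleton] at hj₁ hj₂; omega
      · exact h3 E hE' F hF' hne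
  · intro π hπ
    rw [mem_filter] at hπ
    exact Finset.insert_erase hπ.2
  · intro σ hσ
    rw [mem_NCon] at hσ
    apply Finset.erase_insert
    intro hmem
    have : (1:ℕ) ∈ Finset.Icc 2 m := by
      rw [← hσ.2.1]; exact mem_biUnion.mpr ⟨{1}, hmem, mem_singleton_self 1⟩
    rw [mem_Icc] at this; omega
  · intro π hπ
    rw [mem_filter] at hπ
    unfold W
    rw [← Finset.mul_prod_erase π _ hπ.2]
    simp

end SchroderAux
namespace SchroderAux
open Finset

lemma rank_reindex (T : Finset ℕ) (F : ℕ → ℕ) :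
    ∑ c ∈ T, F ((T.filter (· < c)).card) = ∑ i ∈ Finset.range T.card, F i := by
  set r : ℕ → ℕ := fun c => (T.filter (· < c)).card with hr
  have hmono : ∀ c ∈ T, ∀ c' ∈ T, c < c' → r c < r c' := by
    intro c hc c' hc' hlt
    apply Finset.card_lt_card
    constructor
    · intro x hx
      rw [mem_filter] at hx ⊢
      exact ⟨hx.1, by omega⟩
    · intro hsub
      have : c ∈ T.filter (· < c') := mem_filter.mpr ⟨hc, hlt⟩
      have := mem_filter.mp (hsub this)
      omega
  have hinj : ∀ c ∈ T, ∀ c' ∈ T, r c = r c' → c = c' := by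
    intro c hc c' hc' heq
    rcases Nat.lt_trichotomy c c' with h | h | h
    · exact absurd heq (Nat.ne_of_lt (hmono c hc c' hc' h))
    · exact h
    · exact absurd heq.symm (Nat.ne_of_lt (hmono c' hc' c hc h))
  have himg : T.image r = Finset.range T.card := by
    apply Finset.eq_of_subset_of_card_le
    · intro i hi
      obtain ⟨c, hc, rfl⟩ := mem_image.mp hi
      rw [mem_range]
      apply Finset.card_lt_card
      constructor
      · exact Finset.filter_subset _ _
      · intro hsub
        have := mem_filter.mp (hsub hc)
        omega
    · rw [Finset.card_range, Finset.card_image_of_injOn]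
      intro c hc c' hc' h
      exact hinj c hc c' hc' h
  rw [← himg, Finset.sum_image hinj]

lemma segner_block {B : Finset ℕ} (h1 : 1 ∈ B) (hge : ∀ x ∈ B, 1 ≤ x)
    (hk : 2 ≤ B.card) :
    ∑ c ∈ B.erase 1,
      catalan ((B.filter (· < c)).card - 1) *
        catalan (B.card - 1 - (B.filter (· < c)).card)
      = catalan (B.card - 1) := by
  have hterm : ∀ c ∈ B.erase 1,
      catalan ((B.filter (· < c)).card - 1) *
        catalan (B.card - 1 - (B.filter (· < c)).card)
      = catalan (((B.erase 1).filter (· < c)).card) *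
        catalan (B.card - 2 - ((B.erase 1).filter (· < c)).card) := by
    intro c hc
    have hc' := mem_of_mem_erase hc
    have hcne : c ≠ 1 := (mem_erase.mp hc).1
    have hc2 : 2 ≤ c := by have := hge c hc'; omega
    have hfilter : B.filter (· < c) = insert 1 ((B.erase 1).filter (· < c)) := by
      ext x
      simp only [mem_filter, mem_insert, mem_erase]
      constructor
      · rintro ⟨hx, hxc⟩
        by_cases hx1 : x = 1
        · left; exact hx1
        · right; exact ⟨⟨hx1, hx⟩, hxc⟩
      · rintro (rfl | ⟨⟨_, hx⟩, hxc⟩)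
        · exact ⟨h1, by omega⟩
        · exact ⟨hx, hxc⟩
    have hnotmem : (1:ℕ) ∉ (B.erase 1).filter (· < c) := by
      simp [mem_filter, mem_erase]
    rw [hfilter, Finset.card_insert_of_notMem hnotmem]
    congr 2
    omega
  rw [Finset.sum_congr rfl hterm]
  rw [rank_reindex (B.erase 1) (fun i => catalan i * catalan (B.card - 2 - i))]
  rw [Finset.card_erase_of_mem h1]
  have h2 : B.card - 1 = (B.card - 2) + 1 := by omega
  rw [h2, catalan_succ]
  rw [Fin.sum_univ_eq_sum_range (fun i => catalan i * catalan (B.card - 2 - i))]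

end SchroderAux
namespace SchroderAux
open Finset

noncomputable def piL (π : Finset (Finset ℕ)) (c : ℕ) : Finset (Finset ℕ) :=
  insert ((blockOf π 1).filter (· < c))
    ((π.erase (blockOf π 1)).filter (fun B => ∀ x ∈ B, x < c))

noncomputable def piR (π : Finset (Finset ℕ)) (c : ℕ) : Finset (Finset ℕ) :=
  insert ((blockOf π 1).filter (fun x => ¬ x < c))
    ((π.erase (blockOf π 1)).filter (fun B => ∀ x ∈ B, c < x))

noncomputable def mrg (π₁ π₂ : Finset (Finset ℕ)) (b : ℕ) : Finset (Finset ℕ) :=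
  insert (blockOf π₁ 1 ∪ blockOf π₂ b)
    ((π₁.erase (blockOf π₁ 1)) ∪ (π₂.erase (blockOf π₂ b)))

section Split

variable {m c : ℕ} {π : Finset (Finset ℕ)}

lemma blockOf_one (hπ : IsNCon (Finset.Icc 1 m) π) (hm : 1 ≤ m) :
    blockOf π 1 ∈ π ∧ 1 ∈ blockOf π 1 :=
  blockOf_spec (exists_block hπ (by rw [mem_Icc]; omega))

/-- elements of blocks other than `blockOf π 1` do not contain 1 -/
lemma one_not_mem_other (hπ : IsNCon (Finset.Icc 1 m) π) {B : Finset ℕ}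
    (hB : B ∈ π.erase (blockOf π 1)) : (1:ℕ) ∉ B := by
  intro h1
  exact (mem_erase.mp hB).1 (block_unique hπ (mem_of_mem_erase hB) h1)

lemma c_bounds (hπ : IsNCon (Finset.Icc 1 m) π) (hm : 1 ≤ m)
    (hc : c ∈ blockOf π 1) (hc1 : c ≠ 1) : 2 ≤ c ∧ c ≤ m := by
  have := mem_of_mem_block hπ (blockOf_one hπ hm).1 hc
  rw [mem_Icc] at this; omega

lemma isNCon_piL (hπ : IsNCon (Finset.Icc 1 m) π) (hm : 1 ≤ m)
    (hc : c ∈ blockOf π 1) (hc1 : c ≠ 1) :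
    IsNCon (Finset.Icc 1 (c - 1)) (piL π c) := by
  obtain ⟨hB₁π, h1B₁⟩ := blockOf_one hπ hm
  obtain ⟨hc2, hcm⟩ := c_bounds hπ hm hc hc1
  set B₁ := blockOf π 1 with hB₁
  refine ⟨?_, ?_, ?_⟩
  · intro E hE
    rcases mem_insert.mp hE with rfl | hE'
    · exact ⟨1, mem_filter.mpr ⟨h1B₁, by omega⟩⟩
    · exact hπ.1 E (mem_of_mem_erase (mem_filter.mp hE').1)
  · ext x
    simp only [piL, biUnion_insert, mem_union, mem_biUnion, mem_filter, mem_erase,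
      id_eq, mem_Icc]
    constructor
    · rintro (⟨hx, hxc⟩ | ⟨B, ⟨⟨hBne, hBπ⟩, hBlt⟩, hxB⟩)
      · have := mem_of_mem_block hπ hB₁π hx; rw [mem_Icc] at this; omega
      · have := mem_of_mem_block hπ hBπ hxB; rw [mem_Icc] at this
        have := hBlt x hxB; omega
    · rintro ⟨hx1, hxc⟩
      have hxm : x ∈ Finset.Icc 1 m := by rw [mem_Icc]; omega
      obtain ⟨B, hBπ, hxB⟩ := exists_block hπ hxm
      by_cases hB : B = B₁
      · subst hB; left; exact ⟨hxB, by omega⟩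
      · right
        rcases separation hπ hB₁π h1B₁ hc hBπ hB with hlt | hgt
        · exact ⟨B, ⟨⟨hB, hBπ⟩, hlt⟩, hxB⟩
        · have := hgt x hxB; omega
  · intro E hE F hF hne
    rcases mem_insert.mp hE with rfl | hE' <;> rcases mem_insert.mp hF with rfl | hF'
    · exact absurd rfl hne
    · have hFπ := mem_of_mem_erase (mem_filter.mp hF').1
      have hFne := (mem_erase.mp (mem_filter.mp hF').1).1
      obtain ⟨hd, hcr⟩ := hπ.2.2 B₁ hB₁π F hFπ (Ne.symm hFne)
      refine ⟨Finset.disjoint_of_subset_left (filter_subset _ _) hd, ?_⟩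
      exact fun h => hcr (crossing_mono (filter_subset _ _) Finset.Subset.rfl h)
    · have hEπ := mem_of_mem_erase (mem_filter.mp hE').1
      have hEne := (mem_erase.mp (mem_filter.mp hE').1).1
      obtain ⟨hd, hcr⟩ := hπ.2.2 E hEπ B₁ hB₁π hEne
      refine ⟨Finset.disjoint_of_subset_right (filter_subset _ _) hd, ?_⟩
      exact fun h => hcr (crossing_mono Finset.Subset.rfl (filter_subset _ _) h)
    · have hEπ := mem_of_mem_erase (mem_filter.mp hE').1
      have hFπ := mem_of_mem_erase (mem_filter.mp hF').1
      exact hπ.2.2 E hEπ F hFπ hne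

lemma isNCon_piR (hπ : IsNCon (Finset.Icc 1 m) π) (hm : 1 ≤ m)
    (hc : c ∈ blockOf π 1) (hc1 : c ≠ 1) :
    IsNCon (Finset.Icc c m) (piR π c) := by
  obtain ⟨hB₁π, h1B₁⟩ := blockOf_one hπ hm
  obtain ⟨hc2, hcm⟩ := c_bounds hπ hm hc hc1
  set B₁ := blockOf π 1 with hB₁
  refine ⟨?_, ?_, ?_⟩
  · intro E hE
    rcases mem_insert.mp hE with rfl | hE'
    · exact ⟨c, mem_filter.mpr ⟨hc, by omega⟩⟩
    · exact hπ.1 E (mem_of_mem_erase (mem_filter.mp hE').1)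
  · ext x
    simp only [piR, biUnion_insert, mem_union, mem_biUnion, mem_filter, mem_erase,
      id_eq, mem_Icc]
    constructor
    · rintro (⟨hx, hxc⟩ | ⟨B, ⟨⟨hBne, hBπ⟩, hBgt⟩, hxB⟩)
      · have := mem_of_mem_block hπ hB₁π hx; rw [mem_Icc] at this; omega
      · have := mem_of_mem_block hπ hBπ hxB; rw [mem_Icc] at this
        have := hBgt x hxB; omega
    · rintro ⟨hx1, hxc⟩
      have hxm : x ∈ Finset.Icc 1 m := by rw [mem_Icc]; omega
      obtain ⟨B, hBπ, hxB⟩ := exists_block hπ hxm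
      by_cases hB : B = B₁
      · subst hB; left; exact ⟨hxB, by omega⟩
      · right
        rcases separation hπ hB₁π h1B₁ hc hBπ hB with hlt | hgt
        · have := hlt x hxB; omega
        · exact ⟨B, ⟨⟨hB, hBπ⟩, hgt⟩, hxB⟩
  · intro E hE F hF hne
    rcases mem_insert.mp hE with rfl | hE' <;> rcases mem_insert.mp hF with rfl | hF'
    · exact absurd rfl hne
    · have hFπ := mem_of_mem_erase (mem_filter.mp hF').1
      have hFne := (mem_erase.mp (mem_filter.mp hF').1).1
      obtain ⟨hd, hcr⟩ := hπ.2.2 B₁ hB₁π F hFπ (Ne.symm hFne)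
      refine ⟨Finset.disjoint_of_subset_left (filter_subset _ _) hd, ?_⟩
      exact fun h => hcr (crossing_mono (filter_subset _ _) Finset.Subset.rfl h)
    · have hEπ := mem_of_mem_erase (mem_filter.mp hE').1
      have hEne := (mem_erase.mp (mem_filter.mp hE').1).1
      obtain ⟨hd, hcr⟩ := hπ.2.2 E hEπ B₁ hB₁π hEne
      refine ⟨Finset.disjoint_of_subset_right (filter_subset _ _) hd, ?_⟩
      exact fun h => hcr (crossing_mono Finset.Subset.rfl (filter_subset _ _) h)
    · have hEπ := mem_of_mem_erase (mem_filter.mp hE').1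
      have hFπ := mem_of_mem_erase (mem_filter.mp hF').1
      exact hπ.2.2 E hEπ F hFπ hne

/-- the distinguished left block is not among the filtered other blocks -/
lemma leftblock_notmem (hπ : IsNCon (Finset.Icc 1 m) π) (hm : 1 ≤ m)
    (hc : c ∈ blockOf π 1) (hc1 : c ≠ 1) :
    (blockOf π 1).filter (· < c)
      ∉ (π.erase (blockOf π 1)).filter (fun B => ∀ x ∈ B, x < c) := by
  obtain ⟨hB₁π, h1B₁⟩ := blockOf_one hπ hm
  obtain ⟨hc2, hcm⟩ := c_bounds hπ hm hc hc1
  intro hmem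
  have h1 : (1:ℕ) ∈ (blockOf π 1).filter (· < c) := mem_filter.mpr ⟨h1B₁, by omega⟩
  exact one_not_mem_other hπ (mem_filter.mp hmem).1 h1

lemma rightblock_notmem (hπ : IsNCon (Finset.Icc 1 m) π) (hm : 1 ≤ m)
    (hc : c ∈ blockOf π 1) (hc1 : c ≠ 1) :
    (blockOf π 1).filter (fun x => ¬ x < c)
      ∉ (π.erase (blockOf π 1)).filter (fun B => ∀ x ∈ B, c < x) := by
  intro hmem
  have hcmem : c ∈ (blockOf π 1).filter (fun x => ¬ x < c) :=
    mem_filter.mpr ⟨hc, by omega⟩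
  have := (mem_filter.mp hmem).2 c hcmem
  omega

lemma blockOf_piL (hπ : IsNCon (Finset.Icc 1 m) π) (hm : 1 ≤ m)
    (hc : c ∈ blockOf π 1) (hc1 : c ≠ 1) :
    blockOf (piL π c) 1 = (blockOf π 1).filter (· < c) := by
  obtain ⟨hB₁π, h1B₁⟩ := blockOf_one hπ hm
  obtain ⟨hc2, hcm⟩ := c_bounds hπ hm hc hc1
  exact (block_unique (isNCon_piL hπ hm hc hc1) (mem_insert_self _ _)
    (mem_filter.mpr ⟨h1B₁, by omega⟩)).symm

lemma blockOf_piR (hπ : IsNCon (Finset.Icc 1 m) π) (hm : 1 ≤ m)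
    (hc : c ∈ blockOf π 1) (hc1 : c ≠ 1) :
    blockOf (piR π c) c = (blockOf π 1).filter (fun x => ¬ x < c) := by
  exact (block_unique (isNCon_piR hπ hm hc hc1) (mem_insert_self _ _)
    (mem_filter.mpr ⟨hc, by omega⟩)).symm

/-- the other blocks split into the left and right parts -/
lemma erase_split (hπ : IsNCon (Finset.Icc 1 m) π) (hm : 1 ≤ m)
    (hc : c ∈ blockOf π 1) (hc1 : c ≠ 1) :
    (π.erase (blockOf π 1)).filter (fun B => ¬ ∀ x ∈ B, x < c)
      = (π.erase (blockOf π 1)).filter (fun B => ∀ x ∈ B, c < x) := by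
  obtain ⟨hB₁π, h1B₁⟩ := blockOf_one hπ hm
  apply Finset.filter_congr
  intro B hB
  have hBπ := mem_of_mem_erase hB
  have hBne := (mem_erase.mp hB).1
  obtain ⟨y, hy⟩ := hπ.1 B hBπ
  rcases separation hπ hB₁π h1B₁ hc hBπ hBne with hlt | hgt
  · constructor
    · intro h; exact absurd hlt h
    · intro h
      have h1 := h y hy
      have h2 := hlt y hy
      omega
  · constructor
    · intro _; exact hgt
    · intro _ hall
      have h1 := hall y hy
      have h2 := hgt y hy
      omega

end Split

end SchroderAux
namespace SchroderAux
open Finset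

section Merge

variable {a m : ℕ} {π₁ π₂ : Finset (Finset ℕ)}

lemma merge_basic (h₁ : IsNCon (Finset.Icc 1 a) π₁)
    (h₂ : IsNCon (Finset.Icc (a+1) m) π₂) (ha : 1 ≤ a) (ham : a + 1 ≤ m) :
    (blockOf π₁ 1 ∈ π₁ ∧ 1 ∈ blockOf π₁ 1) ∧
      (blockOf π₂ (a+1) ∈ π₂ ∧ (a+1) ∈ blockOf π₂ (a+1)) := by
  constructor
  · exact blockOf_spec (exists_block h₁ (by rw [mem_Icc]; omega))
  · exact blockOf_spec (exists_block h₂ (by rw [mem_Icc]; omega))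

lemma mem_bound₁ (h₁ : IsNCon (Finset.Icc 1 a) π₁) {B : Finset ℕ} (hB : B ∈ π₁)
    {x : ℕ} (hx : x ∈ B) : 1 ≤ x ∧ x ≤ a := by
  have := mem_of_mem_block h₁ hB hx; rw [mem_Icc] at this; exact this

lemma mem_bound₂ (h₂ : IsNCon (Finset.Icc (a+1) m) π₂) {B : Finset ℕ} (hB : B ∈ π₂)
    {x : ℕ} (hx : x ∈ B) : a + 1 ≤ x ∧ x ≤ m := by
  have := mem_of_mem_block h₂ hB hx; rw [mem_Icc] at this; exact this

/-- elements of non-distinguished right blocks exceed `a+1` -/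
lemma mem_bound₂' (h₂ : IsNCon (Finset.Icc (a+1) m) π₂) {B : Finset ℕ}
    (hB : B ∈ π₂.erase (blockOf π₂ (a+1))) {x : ℕ} (hx : x ∈ B) :
    a + 2 ≤ x ∧ x ≤ m := by
  have hb := mem_bound₂ h₂ (mem_of_mem_erase hB) hx
  have : x ≠ a + 1 := by
    rintro rfl
    exact (mem_erase.mp hB).1 (block_unique h₂ (mem_of_mem_erase hB) hx)
  omega

lemma one_notmem_erase₁ (h₁ : IsNCon (Finset.Icc 1 a) π₁) {B : Finset ℕ}
    (hB : B ∈ π₁.erase (blockOf π₁ 1)) : (1:ℕ) ∉ B := by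
  intro h1
  exact (mem_erase.mp hB).1 (block_unique h₁ (mem_of_mem_erase hB) h1)

lemma isNCon_mrg (h₁ : IsNCon (Finset.Icc 1 a) π₁)
    (h₂ : IsNCon (Finset.Icc (a+1) m) π₂) (ha : 1 ≤ a) (ham : a + 1 ≤ m) :
    IsNCon (Finset.Icc 1 m) (mrg π₁ π₂ (a+1)) := by
  obtain ⟨⟨hB₁, h1B₁⟩, ⟨hB₂, haB₂⟩⟩ := merge_basic h₁ h₂ ha ham
  set Q₁ := blockOf π₁ 1 with hQ₁
  set Q₂ := blockOf π₂ (a+1) with hQ₂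
  -- key crossing facts
  have cross₁ : ∀ F ∈ π₁.erase Q₁, Disjoint (Q₁ ∪ Q₂) F ∧
      ¬ Crossing (Q₁ ∪ Q₂) F ∧ ¬ Crossing F (Q₁ ∪ Q₂) := by
    intro F hF
    have hFπ := mem_of_mem_erase hF
    have hFne := (mem_erase.mp hF).1
    obtain ⟨hd, hcr⟩ := h₁.2.2 Q₁ hB₁ F hFπ (Ne.symm hFne)
    obtain ⟨hd', hcr'⟩ := h₁.2.2 F hFπ Q₁ hB₁ hFne
    refine ⟨?_, ?_, ?_⟩
    · rw [Finset.disjoint_left]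
      intro x hx hxF
      rcases mem_union.mp hx with hx1 | hx2
      · exact Finset.disjoint_left.mp hd hx1 hxF
      · have := mem_bound₂ h₂ hB₂ hx2
        have := mem_bound₁ h₁ hFπ hxF
        omega
    · rintro ⟨i₁, hi₁, i₂, hi₂, j₁, hj₁, j₂, hj₂, c1, c2, c3⟩
      have hj₂a := mem_bound₁ h₁ hFπ hj₂
      have hi₂Q₁ : i₂ ∈ Q₁ := by
        rcases mem_union.mp hi₂ with h | h
        · exact h
        · have := mem_bound₂ h₂ hB₂ h; omega
      have hi₁Q₁ : i₁ ∈ Q₁ := by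
        rcases mem_union.mp hi₁ with h | h
        · exact h
        · have := mem_bound₂ h₂ hB₂ h; omega
      exact hcr ⟨i₁, hi₁Q₁, i₂, hi₂Q₁, j₁, hj₁, j₂, hj₂, c1, c2, c3⟩
    · rintro ⟨i₁, hi₁, i₂, hi₂, j₁, hj₁, j₂, hj₂, c1, c2, c3⟩
      have hi₂a := mem_bound₁ h₁ hFπ hi₂
      have hj₁Q₁ : j₁ ∈ Q₁ := by
        rcases mem_union.mp hj₁ with h | h
        · exact h
        · have := mem_bound₂ h₂ hB₂ h; omega
      rcases mem_union.mp hj₂ with hj₂Q₁ | hj₂Q₂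
      · exact hcr' ⟨i₁, hi₁, i₂, hi₂, j₁, hj₁Q₁, j₂, hj₂Q₁, c1, c2, c3⟩
      · -- use 1 ∈ Q₁, 1 < i₁
        have h1F : (1:ℕ) ∉ F := one_notmem_erase₁ h₁ hF
        have hi₁1 : 1 ≤ i₁ := (mem_bound₁ h₁ hFπ hi₁).1
        have hi₁ne : i₁ ≠ 1 := by rintro rfl; exact h1F hi₁
        exact hcr ⟨1, h1B₁, j₁, hj₁Q₁, i₁, hi₁, i₂, hi₂, by omega, by omega, by omega⟩
  have cross₂ : ∀ F ∈ π₂.erase Q₂, Disjoint (Q₁ ∪ Q₂) F ∧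
      ¬ Crossing (Q₁ ∪ Q₂) F ∧ ¬ Crossing F (Q₁ ∪ Q₂) := by
    intro F hF
    have hFπ := mem_of_mem_erase hF
    have hFne := (mem_erase.mp hF).1
    obtain ⟨hd, hcr⟩ := h₂.2.2 Q₂ hB₂ F hFπ (Ne.symm hFne)
    obtain ⟨hd', hcr'⟩ := h₂.2.2 F hFπ Q₂ hB₂ hFne
    refine ⟨?_, ?_, ?_⟩
    · rw [Finset.disjoint_left]
      intro x hx hxF
      rcases mem_union.mp hx with hx1 | hx2
      · have := mem_bound₁ h₁ hB₁ hx1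
        have := mem_bound₂' h₂ hF hxF
        omega
      · exact Finset.disjoint_left.mp hd hx2 hxF
    · rintro ⟨i₁, hi₁, i₂, hi₂, j₁, hj₁, j₂, hj₂, c1, c2, c3⟩
      have hj₁a := mem_bound₂' h₂ hF hj₁
      have hi₂Q₂ : i₂ ∈ Q₂ := by
        rcases mem_union.mp hi₂ with h | h
        · have := mem_bound₁ h₁ hB₁ h; omega
        · exact h
      rcases mem_union.mp hi₁ with hi₁Q₁ | hi₁Q₂
      · -- use a+1 ∈ Q₂ in place of i₁
        have := mem_bound₁ h₁ hB₁ hi₁Q₁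
        exact hcr ⟨a+1, haB₂, i₂, hi₂Q₂, j₁, hj₁, j₂, hj₂, by omega, by omega, by omega⟩
      · exact hcr ⟨i₁, hi₁Q₂, i₂, hi₂Q₂, j₁, hj₁, j₂, hj₂, c1, c2, c3⟩
    · rintro ⟨i₁, hi₁, i₂, hi₂, j₁, hj₁, j₂, hj₂, c1, c2, c3⟩
      have hi₁a := mem_bound₂' h₂ hF hi₁
      have hj₁Q₂ : j₁ ∈ Q₂ := by
        rcases mem_union.mp hj₁ with h | h
        · have := mem_bound₁ h₁ hB₁ h; omega
        · exact h
      have hj₂Q₂ : j₂ ∈ Q₂ := by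
        rcases mem_union.mp hj₂ with h | h
        · have := mem_bound₁ h₁ hB₁ h; omega
        · exact h
      exact hcr' ⟨i₁, hi₁, i₂, hi₂, j₁, hj₁Q₂, j₂, hj₂Q₂, c1, c2, c3⟩
  refine ⟨?_, ?_, ?_⟩
  · intro E hE
    rcases mem_insert.mp hE with rfl | hE'
    · exact ⟨1, mem_union_left _ h1B₁⟩
    · rcases mem_union.mp hE' with h | h
      · exact h₁.1 E (mem_of_mem_erase h)
      · exact h₂.1 E (mem_of_mem_erase h)
  · ext x
    simp only [mrg, biUnion_insert, mem_union, mem_biUnion, id_eq, mem_Icc]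
    constructor
    · rintro ((hx | hx) | ⟨B, (hB | hB), hxB⟩)
      · have := mem_bound₁ h₁ hB₁ hx; omega
      · have := mem_bound₂ h₂ hB₂ hx; omega
      · have := mem_bound₁ h₁ (mem_of_mem_erase hB) hxB; omega
      · have := mem_bound₂ h₂ (mem_of_mem_erase hB) hxB; omega
    · rintro ⟨hx1, hxm⟩
      by_cases hxa : x ≤ a
      · obtain ⟨B, hBπ, hxB⟩ := exists_block h₁ (x := x) (by rw [mem_Icc]; omega)
        by_cases hB : B = Q₁
        · subst hB; left; left; exact hxB
        · right; exact ⟨B, Or.inl (mem_erase.mpr ⟨hB, hBπ⟩), hxB⟩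
      · obtain ⟨B, hBπ, hxB⟩ := exists_block h₂ (x := x) (by rw [mem_Icc]; omega)
        by_cases hB : B = Q₂
        · subst hB; left; right; exact hxB
        · right; exact ⟨B, Or.inr (mem_erase.mpr ⟨hB, hBπ⟩), hxB⟩
  · intro E hE F hF hne
    rcases mem_insert.mp hE with rfl | hE' <;> rcases mem_insert.mp hF with rfl | hF'
    · exact absurd rfl hne
    · rcases mem_union.mp hF' with h | h
      · exact ⟨(cross₁ F h).1, (cross₁ F h).2.1⟩
      · exact ⟨(cross₂ F h).1, (cross₂ F h).2.1⟩
    · rcases mem_union.mp hE' with h | h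
      · exact ⟨(cross₁ E h).1.symm, (cross₁ E h).2.2⟩
      · exact ⟨(cross₂ E h).1.symm, (cross₂ E h).2.2⟩
    · rcases mem_union.mp hE' with hEa | hEb <;> rcases mem_union.mp hF' with hFa | hFb
      · exact h₁.2.2 E (mem_of_mem_erase hEa) F (mem_of_mem_erase hFa) hne
      · have hbelow : ∀ x ∈ E, ∀ y ∈ F, x < y := by
          intro x hx y hy
          have := mem_bound₁ h₁ (mem_of_mem_erase hEa) hx
          have := mem_bound₂' h₂ hFb hy
          omega
        refine ⟨?_, (not_crossing_of_below hbelow).1⟩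
        rw [Finset.disjoint_left]
        intro x hx hxF
        have := hbelow x hx x hxF; omega
      · have hbelow : ∀ x ∈ F, ∀ y ∈ E, x < y := by
          intro x hx y hy
          have := mem_bound₁ h₁ (mem_of_mem_erase hFa) hx
          have := mem_bound₂' h₂ hEb hy
          omega
        refine ⟨?_, (not_crossing_of_below hbelow).2⟩
        rw [Finset.disjoint_left]
        intro x hx hxF
        have := hbelow x hxF x hx; omega
      · exact h₂.2.2 E (mem_of_mem_erase hEb) F (mem_of_mem_erase hFb) hne

lemma mrg_union_notmem (h₁ : IsNCon (Finset.Icc 1 a) π₁)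
    (h₂ : IsNCon (Finset.Icc (a+1) m) π₂) (ha : 1 ≤ a) (ham : a + 1 ≤ m) :
    blockOf π₁ 1 ∪ blockOf π₂ (a+1)
      ∉ (π₁.erase (blockOf π₁ 1)) ∪ (π₂.erase (blockOf π₂ (a+1))) := by
  obtain ⟨⟨hB₁, h1B₁⟩, ⟨hB₂, haB₂⟩⟩ := merge_basic h₁ h₂ ha ham
  intro hmem
  rcases mem_union.mp hmem with h | h
  · have := mem_bound₁ h₁ (mem_of_mem_erase h) (mem_union_right _ haB₂)
    omega
  · exact absurd (mem_bound₂' h₂ h (mem_union_left _ h1B₁)).1 (by omega)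

lemma blockOf_mrg (h₁ : IsNCon (Finset.Icc 1 a) π₁)
    (h₂ : IsNCon (Finset.Icc (a+1) m) π₂) (ha : 1 ≤ a) (ham : a + 1 ≤ m) :
    blockOf (mrg π₁ π₂ (a+1)) 1 = blockOf π₁ 1 ∪ blockOf π₂ (a+1) := by
  obtain ⟨⟨hB₁, h1B₁⟩, ⟨hB₂, haB₂⟩⟩ := merge_basic h₁ h₂ ha ham
  exact (block_unique (isNCon_mrg h₁ h₂ ha ham) (mem_insert_self _ _)
    (mem_union_left _ h1B₁)).symm

end Merge

end SchroderAux
namespace SchroderAux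
open Finset

section Inverses

variable {m c a : ℕ} {π π₁ π₂ : Finset (Finset ℕ)}

lemma mrg_piL_piR (hπ : IsNCon (Finset.Icc 1 m) π) (hm : 1 ≤ m)
    (hc : c ∈ blockOf π 1) (hc1 : c ≠ 1) :
    mrg (piL π c) (piR π c) c = π := by
  obtain ⟨hB₁π, h1B₁⟩ := blockOf_one hπ hm
  rw [mrg, blockOf_piL hπ hm hc hc1, blockOf_piR hπ hm hc hc1]
  rw [piL, piR, Finset.erase_insert (leftblock_notmem hπ hm hc hc1),
    Finset.erase_insert (rightblock_notmem hπ hm hc hc1)]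
  rw [Finset.filter_union_filter_not_eq (p := (· < c)) (blockOf π 1)]
  rw [← erase_split hπ hm hc hc1]
  rw [Finset.filter_union_filter_not_eq (p := fun B => ∀ x ∈ B, x < c) (π.erase (blockOf π 1))]
  exact Finset.insert_erase hB₁π

lemma piL_mrg (h₁ : IsNCon (Finset.Icc 1 a) π₁)
    (h₂ : IsNCon (Finset.Icc (a+1) m) π₂) (ha : 1 ≤ a) (ham : a + 1 ≤ m) :
    piL (mrg π₁ π₂ (a+1)) (a+1) = π₁ := by
  obtain ⟨⟨hB₁, h1B₁⟩, ⟨hB₂, haB₂⟩⟩ := merge_basic h₁ h₂ ha ham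
  rw [piL, blockOf_mrg h₁ h₂ ha ham]
  have hfil : (blockOf π₁ 1 ∪ blockOf π₂ (a+1)).filter (· < a+1) = blockOf π₁ 1 := by
    ext x
    simp only [mem_filter, mem_union]
    constructor
    · rintro ⟨h | h, hx⟩
      · exact h
      · have := mem_bound₂ h₂ hB₂ h; omega
    · intro h
      exact ⟨Or.inl h, by have := mem_bound₁ h₁ hB₁ h; omega⟩
  have herase : (mrg π₁ π₂ (a+1)).erase (blockOf π₁ 1 ∪ blockOf π₂ (a+1))
      = (π₁.erase (blockOf π₁ 1)) ∪ (π₂.erase (blockOf π₂ (a+1))) :=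
    Finset.erase_insert (mrg_union_notmem h₁ h₂ ha ham)
  rw [hfil, herase]
  have hfil2 : ((π₁.erase (blockOf π₁ 1)) ∪ (π₂.erase (blockOf π₂ (a+1)))).filter
      (fun B => ∀ x ∈ B, x < a + 1) = π₁.erase (blockOf π₁ 1) := by
    ext B
    simp only [mem_filter, mem_union]
    constructor
    · rintro ⟨h | h, hlt⟩
      · exact h
      · obtain ⟨y, hy⟩ := h₂.1 B (mem_of_mem_erase h)
        have := mem_bound₂' h₂ h hy
        have := hlt y hy
        omega
    · intro h
      refine ⟨Or.inl h, fun x hx => ?_⟩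
      have := mem_bound₁ h₁ (mem_of_mem_erase h) hx; omega
  rw [hfil2]
  exact Finset.insert_erase hB₁
lemma piR_mrg (h₁ : IsNCon (Finset.Icc 1 a) π₁)
    (h₂ : IsNCon (Finset.Icc (a+1) m) π₂) (ha : 1 ≤ a) (ham : a + 1 ≤ m) :
    piR (mrg π₁ π₂ (a+1)) (a+1) = π₂ := by
  obtain ⟨⟨hB₁, h1B₁⟩, ⟨hB₂, haB₂⟩⟩ := merge_basic h₁ h₂ ha ham
  rw [piR, blockOf_mrg h₁ h₂ ha ham]
  have hfil : (blockOf π₁ 1 ∪ blockOf π₂ (a+1)).filter (fun x => ¬ x < a+1)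
      = blockOf π₂ (a+1) := by
    ext x
    simp only [mem_filter, mem_union]
    constructor
    · rintro ⟨h | h, hx⟩
      · have := mem_bound₁ h₁ hB₁ h; omega
      · exact h
    · intro h
      exact ⟨Or.inr h, by have := mem_bound₂ h₂ hB₂ h; omega⟩
  have herase : (mrg π₁ π₂ (a+1)).erase (blockOf π₁ 1 ∪ blockOf π₂ (a+1))
      = (π₁.erase (blockOf π₁ 1)) ∪ (π₂.erase (blockOf π₂ (a+1))) :=
    Finset.erase_insert (mrg_union_notmem h₁ h₂ ha ham)
  rw [hfil, herase]
  have hfil2 : ((π₁.erase (blockOf π₁ 1)) ∪ (π₂.erase (blockOf π₂ (a+1)))).filter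
      (fun B => ∀ x ∈ B, a + 1 < x) = π₂.erase (blockOf π₂ (a+1)) := by
    ext B
    simp only [mem_filter, mem_union]
    constructor
    · rintro ⟨h | h, hgt⟩
      · obtain ⟨y, hy⟩ := h₁.1 B (mem_of_mem_erase h)
        have := mem_bound₁ h₁ (mem_of_mem_erase h) hy
        have := hgt y hy
        omega
      · exact h
    · intro h
      refine ⟨Or.inr h, fun x hx => ?_⟩
      have := mem_bound₂' h₂ h hx; omega
  rw [hfil2]
  exact Finset.insert_erase hB₂

noncomputable def w1 (π : Finset (Finset ℕ)) (c : ℕ) : ℕ :=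
  catalan (((blockOf π 1).filter (· < c)).card - 1) *
    catalan ((blockOf π 1).card - 1 - ((blockOf π 1).filter (· < c)).card) *
    ∏ B ∈ π.erase (blockOf π 1), catalan (B.card - 1)

lemma weight_split (hπ : IsNCon (Finset.Icc 1 m) π) (hm : 1 ≤ m)
    (hc : c ∈ blockOf π 1) (hc1 : c ≠ 1) :
    W (piL π c) * W (piR π c) = w1 π c := by
  obtain ⟨hB₁π, h1B₁⟩ := blockOf_one hπ hm
  set B₁ := blockOf π 1 with hB₁def
  set s := (B₁.filter (· < c)).card with hs
  have hL : W (piL π c) = catalan (s - 1) *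
      ∏ B ∈ (π.erase B₁).filter (fun B => ∀ x ∈ B, x < c), catalan (B.card - 1) := by
    rw [W, piL, Finset.prod_insert (leftblock_notmem hπ hm hc hc1)]
  have hcard : (B₁.filter (fun x => ¬ x < c)).card = B₁.card - s := by
    have := Finset.card_filter_add_card_filter_not (s := B₁) (p := (· < c))
    omega
  have hR : W (piR π c) = catalan (B₁.card - s - 1) *
      ∏ B ∈ (π.erase B₁).filter (fun B => ∀ x ∈ B, c < x), catalan (B.card - 1) := by
    rw [W, piR, Finset.prod_insert (rightblock_notmem hπ hm hc hc1), hcard]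
  rw [hL, hR, w1]
  rw [← erase_split hπ hm hc hc1]
  rw [show (B₁.card - s - 1) = (B₁.card - 1 - s) from by omega]
  rw [← hB₁def, ← hs]
  rw [← Finset.prod_filter_mul_prod_filter_not (π.erase B₁) (fun B => ∀ x ∈ B, x < c)
    (fun B => catalan (B.card - 1))]
  ring

end Inverses

end SchroderAux
namespace SchroderAux
open Finset

lemma W_eq_sum_w1 {m : ℕ} {π : Finset (Finset ℕ)} (hπ : IsNCon (Finset.Icc 1 m) π)
    (hm : 1 ≤ m) (hbig : ∃ B ∈ π, 1 ∈ B ∧ 2 ≤ B.card) :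
    W π = ∑ c ∈ (blockOf π 1).erase 1, w1 π c := by
  obtain ⟨hB₁π, h1B₁⟩ := blockOf_one hπ hm
  obtain ⟨B, hB, h1B, hcard⟩ := hbig
  have hBeq : B = blockOf π 1 := block_unique hπ hB h1B
  have hge : ∀ x ∈ blockOf π 1, 1 ≤ x := fun x hx => by
    have := mem_of_mem_block hπ hB₁π hx; rw [mem_Icc] at this; omega
  rw [W, ← Finset.mul_prod_erase π _ hB₁π]
  rw [← segner_block h1B₁ hge (hBeq ▸ hcard)]
  rw [Finset.sum_mul]
  apply Finset.sum_congr rfl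
  intro c hc
  rw [w1]

lemma sum_merge_case (m : ℕ) (hm : 2 ≤ m) :
    ∑ π ∈ (NCon (Finset.Icc 1 m)).filter (fun π => ∃ B ∈ π, 1 ∈ B ∧ 2 ≤ B.card), W π
      = ∑ a ∈ Finset.Icc 1 (m-1), g (Finset.Icc 1 a) * g (Finset.Icc (a+1) m) := by
  have hRHS : ∑ a ∈ Finset.Icc 1 (m-1), g (Finset.Icc 1 a) * g (Finset.Icc (a+1) m)
      = ∑ p ∈ (Finset.Icc 1 (m-1)).sigma
          (fun a => NCon (Finset.Icc 1 a) ×ˢ NCon (Finset.Icc (a+1) m)),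
          W p.2.1 * W p.2.2 := by
    rw [Finset.sum_sigma]
    apply Finset.sum_congr rfl
    intro x _
    rw [Finset.sum_product, g, g, Finset.sum_mul_sum]
  have hLHS : ∑ π ∈ (NCon (Finset.Icc 1 m)).filter
        (fun π => ∃ B ∈ π, 1 ∈ B ∧ 2 ≤ B.card), W π
      = ∑ q ∈ ((NCon (Finset.Icc 1 m)).filter
          (fun π => ∃ B ∈ π, 1 ∈ B ∧ 2 ≤ B.card)).sigma
          (fun π => (blockOf π 1).erase 1), w1 q.1 q.2 := by
    rw [Finset.sum_sigma]
    apply Finset.sum_congr rfl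
    intro π hπ
    rw [mem_filter, mem_NCon] at hπ
    exact W_eq_sum_w1 hπ.1 (by omega) hπ.2
  rw [hLHS, hRHS]
  refine Finset.sum_bij'
    (fun q _ => (⟨q.2 - 1, (piL q.1 q.2, piR q.1 q.2)⟩ :
      Σ _ : ℕ, Finset (Finset ℕ) × Finset (Finset ℕ)))
    (fun p _ => (⟨mrg p.2.1 p.2.2 (p.1 + 1), p.1 + 1⟩ :
      Σ _ : Finset (Finset ℕ), ℕ)) ?_ ?_ ?_ ?_ ?_
  · rintro ⟨π, c⟩ hq
    rw [Finset.mem_sigma] at hq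
    dsimp only at hq ⊢
    obtain ⟨h1, h2⟩ := hq
    rw [mem_filter, mem_NCon] at h1
    obtain ⟨hπ, hbig⟩ := h1
    rw [mem_erase] at h2
    obtain ⟨hcne, hcmem⟩ := h2
    obtain ⟨hc2, hcm⟩ := c_bounds hπ (by omega) hcmem hcne
    rw [Finset.mem_sigma]
    dsimp only
    constructor
    · rw [mem_Icc]; omega
    · rw [Finset.mem_product]
      constructor
      · exact mem_NCon.mpr (isNCon_piL hπ (by omega) hcmem hcne)
      · have hc' : c - 1 + 1 = c := by omega
        show piR π c ∈ NCon (Finset.Icc (c - 1 + 1) m)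
        rw [hc']
        exact mem_NCon.mpr (isNCon_piR hπ (by omega) hcmem hcne)
  · rintro ⟨a, π₁, π₂⟩ hp
    rw [Finset.mem_sigma] at hp
    dsimp only at hp ⊢
    obtain ⟨ha, hp2⟩ := hp
    rw [Finset.mem_product] at hp2
    obtain ⟨hπ₁, hπ₂⟩ := hp2
    rw [mem_NCon] at hπ₁ hπ₂
    rw [mem_Icc] at ha
    have ham : a + 1 ≤ m := by omega
    obtain ⟨⟨hB₁, h1B₁⟩, ⟨hB₂, haB₂⟩⟩ := merge_basic hπ₁ hπ₂ ha.1 ham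
    rw [Finset.mem_sigma]
    constructor
    · rw [mem_filter, mem_NCon]
      refine ⟨isNCon_mrg hπ₁ hπ₂ ha.1 ham, ?_⟩
      refine ⟨blockOf π₁ 1 ∪ blockOf π₂ (a+1), mem_insert_self _ _,
        mem_union_left _ h1B₁, ?_⟩
      exact Finset.one_lt_card.mpr
        ⟨1, mem_union_left _ h1B₁, a+1, mem_union_right _ haB₂, by omega⟩
    · show a + 1 ∈ (blockOf (mrg π₁ π₂ (a+1)) 1).erase 1
      rw [blockOf_mrg hπ₁ hπ₂ ha.1 ham]
      exact mem_erase.mpr ⟨by omega, mem_union_right _ haB₂⟩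
  · rintro ⟨π, c⟩ hq
    rw [Finset.mem_sigma] at hq
    dsimp only at hq ⊢
    obtain ⟨h1, h2⟩ := hq
    rw [mem_filter, mem_NCon] at h1
    obtain ⟨hπ, hbig⟩ := h1
    rw [mem_erase] at h2
    obtain ⟨hcne, hcmem⟩ := h2
    obtain ⟨hc2, hcm⟩ := c_bounds hπ (by omega) hcmem hcne
    have hc' : c - 1 + 1 = c := by omega
    show (⟨mrg (piL π c) (piR π c) (c - 1 + 1), c - 1 + 1⟩ :
      Σ _ : Finset (Finset ℕ), ℕ) = ⟨π, c⟩
    rw [hc']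
    exact Sigma.ext (mrg_piL_piR hπ (by omega) hcmem hcne) (heq_of_eq rfl)
  · rintro ⟨a, π₁, π₂⟩ hp
    rw [Finset.mem_sigma] at hp
    dsimp only at hp ⊢
    obtain ⟨ha, hp2⟩ := hp
    rw [Finset.mem_product] at hp2
    obtain ⟨hπ₁, hπ₂⟩ := hp2
    rw [mem_NCon] at hπ₁ hπ₂
    rw [mem_Icc] at ha
    have ham : a + 1 ≤ m := by omega
    show (⟨a + 1 - 1, (piL (mrg π₁ π₂ (a+1)) (a+1), piR (mrg π₁ π₂ (a+1)) (a+1))⟩ :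
      Σ _ : ℕ, Finset (Finset ℕ) × Finset (Finset ℕ)) = ⟨a, (π₁, π₂)⟩
    have h1 : a + 1 - 1 = a := by omega
    rw [h1, piL_mrg hπ₁ hπ₂ ha.1 ham, piR_mrg hπ₁ hπ₂ ha.1 ham]
  · rintro ⟨π, c⟩ hq
    rw [Finset.mem_sigma] at hq
    dsimp only at hq ⊢
    obtain ⟨h1, h2⟩ := hq
    rw [mem_filter, mem_NCon] at h1
    obtain ⟨hπ, hbig⟩ := h1
    rw [mem_erase] at h2
    obtain ⟨hcne, hcmem⟩ := h2
    exact (weight_split hπ (by omega) hcmem hcne).symm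

lemma filter_not_singleton (m : ℕ) (hm : 1 ≤ m) :
    (NCon (Finset.Icc 1 m)).filter (fun π => ¬ ({1} : Finset ℕ) ∈ π)
      = (NCon (Finset.Icc 1 m)).filter (fun π => ∃ B ∈ π, 1 ∈ B ∧ 2 ≤ B.card) := by
  ext π
  rw [mem_filter, mem_filter]
  constructor
  · rintro ⟨hπ', hne⟩
    refine ⟨hπ', ?_⟩
    have hπ := mem_NCon.mp hπ'
    obtain ⟨hB₁π, h1B₁⟩ := blockOf_one hπ hm
    refine ⟨blockOf π 1, hB₁π, h1B₁, ?_⟩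
    rcases Nat.lt_or_ge (blockOf π 1).card 2 with h | h
    · exfalso
      have hne0 : (blockOf π 1).Nonempty := ⟨1, h1B₁⟩
      have h1 : (blockOf π 1).card = 1 := by
        have := Finset.card_pos.mpr hne0; omega
      obtain ⟨b, hb⟩ := Finset.card_eq_one.mp h1
      rw [hb] at h1B₁
      rw [mem_singleton] at h1B₁
      subst h1B₁
      rw [hb] at hB₁π
      exact hne hB₁π
    · exact h
  · rintro ⟨hπ', B, hB, h1B, hcard⟩
    refine ⟨hπ', ?_⟩
    intro hmem
    have hπ := mem_NCon.mp hπ'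
    have h1 : B = blockOf π 1 := block_unique hπ hB h1B
    have h2 : ({1} : Finset ℕ) = blockOf π 1 :=
      block_unique hπ hmem (mem_singleton_self 1)
    have h3 : ({1} : Finset ℕ) = B := h2.trans h1.symm
    rw [← h3] at hcard
    simp at hcard

set_option maxHeartbeats 1000000 in
lemma g_master (m : ℕ) (hm : 2 ≤ m) :
    g (Finset.Icc 1 m) = g (Finset.Icc 1 (m-1))
      + ∑ a ∈ Finset.Icc 1 (m-1), g (Finset.Icc 1 a) * g (Finset.Icc 1 (m - a)) := by
  have h1 : g (Finset.Icc 1 m)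
      = ∑ π ∈ (NCon (Finset.Icc 1 m)).filter (fun π => ({1} : Finset ℕ) ∈ π), W π
        + ∑ π ∈ (NCon (Finset.Icc 1 m)).filter (fun π => ¬ ({1} : Finset ℕ) ∈ π), W π := by
    rw [g, Finset.sum_filter_add_sum_filter_not]
  rw [h1, filter_not_singleton m (by omega), sum_singleton_case m (by omega),
    sum_merge_case m hm]
  congr 1
  · have : (2:ℕ) = 1 + 1 := rfl
    have h2 : Finset.Icc 2 m = Finset.Icc (1+1) (1 + (m-1)) := by
      congr 1; omega
    rw [h2, g_Icc_shift 1 (m-1)]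
  · apply Finset.sum_congr rfl
    intro a ha
    rw [mem_Icc] at ha
    have h3 : Finset.Icc (a+1) m = Finset.Icc (a+1) (a + (m-a)) := by
      rw [show a + (m-a) = m from by omega]
    rw [h3, g_Icc_shift a (m-a)]

lemma schroder_eq_g (n : ℕ) : schroder n = g (Finset.Icc 1 (n + 1)) := by
  induction n using Nat.strong_induction_on with
  | _ n ih =>
    match n with
    | 0 =>
      rw [schroder]
      rw [Finset.Icc_self, g_singleton]
    | Nat.succ n =>
      rw [schroder]
      have hattach : ∑ k ∈ (Finset.range (n + 1)).attach,
          schroder k.1 * schroder (n - k.1)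
          = ∑ k ∈ Finset.range (n + 1), schroder k * schroder (n - k) :=
        Finset.sum_attach (Finset.range (n+1)) (fun k => schroder k * schroder (n - k))
      rw [hattach]
      have hih : ∀ k ∈ Finset.range (n+1),
          schroder k * schroder (n - k)
          = g (Finset.Icc 1 (k+1)) * g (Finset.Icc 1 (n-k+1)) := by
        intro k hk
        rw [mem_range] at hk
        rw [ih k (by omega), ih (n-k) (by omega)]
      rw [Finset.sum_congr rfl hih, ih n (by omega)]
      rw [g_master (n+2) (by omega)]
      have e1 : n + 2 - 1 = n + 1 := by omega
      rw [e1]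
      congr 1
      -- reindex Icc 1 (n+1) vs range (n+1)
      refine (Finset.sum_nbij' (fun a => a - 1) (fun k => k + 1) ?_ ?_ ?_ ?_ ?_).symm
      · intro a ha
        rw [mem_Icc] at ha
        rw [mem_range]; omega
      · intro k hk
        rw [mem_range] at hk
        rw [mem_Icc]; omega
      · intro a ha
        rw [mem_Icc] at ha
        omega
      · intro k _
        omega
      · intro a ha
        rw [mem_Icc] at ha
        have e2 : a - 1 + 1 = a := by omega
        have e3 : n - (a - 1) + 1 = n + 2 - a := by omega
        rw [e2, e3]

end SchroderAux

/-- The large Schröder number `rₙ` equals the sum over noncrossing partitions `π`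
of `{1,...,n+1}` of the product over blocks `B ∈ π` of the Catalan numbers
`c_{|B|-1}`. -/
theorem schroder_eq_sum_over_noncrossing_partitions (n : ℕ) :
    schroder n = ∑ π ∈ NCset (n + 1), ∏ Bl ∈ π, catalan (Bl.card - 1) := by
  rw [SchroderAux.schroder_eq_g n, SchroderAux.NCset_eq, SchroderAux.g]
  exact Finset.sum_congr rfl (fun π _ => rfl)
end
end

section
/- For a noncrossing linked partition π of {1,...,n}, every element of {1,...,n} belongs to either exactly one or exactly two blocks of π. -/
attribute [local instance] Classical.propDecidable

noncomputable section

/-! By near-disjointness, an element lying in two blocks is the minimum of exactly one of them.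
Hence it cannot lie in three blocks: two of them would agree on whether it is their minimum. -/

theorem NearlyDisjoint.isMinOf_iff_not {E F : Finset ℕ} (h : NearlyDisjoint E F) {i : ℕ}
    (hE : i ∈ E) (hF : i ∈ F) : IsMinOf i E ↔ ¬ IsMinOf i F := by
  rcases h i (Finset.mem_inter.2 ⟨hE, hF⟩) with ⟨hmin, -, hnot⟩ | ⟨hnot, hmin, -⟩ <;> tauto

theorem Finset.card_le_two_of_forall_ne_iff_not {α : Type*} {s : Finset α} {p : α → Prop}
    (h : ∀ x ∈ s, ∀ y ∈ s, x ≠ y → (p x ↔ ¬ p y)) : s.card ≤ 2 := by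
  by_contra! hs
  obtain ⟨a, ha, b, hb, c, hc, hab, hac, hbc⟩ := Finset.two_lt_card.1 hs
  have := h a ha b hb hab
  have := h a ha c hc hac
  have := h b hb c hc hbc
  tauto

namespace IsNCL

theorem filter_mem_nonempty {n : ℕ} {π : Finset (Finset ℕ)} (hπ : IsNCL n π) {ℓ : ℕ}
    (hℓ : ℓ ∈ Finset.Icc 1 n) : (π.filter (ℓ ∈ ·)).Nonempty := by
  obtain ⟨E, hE, hℓE⟩ := Finset.mem_biUnion.1 (hπ.2.1 ▸ hℓ)
  exact ⟨E, Finset.mem_filter.2 ⟨hE, hℓE⟩⟩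

theorem card_filter_mem_le_two {n : ℕ} {π : Finset (Finset ℕ)} (hπ : IsNCL n π) (ℓ : ℕ) :
    (π.filter (ℓ ∈ ·)).card ≤ 2 := by
  refine Finset.card_le_two_of_forall_ne_iff_not (p := IsMinOf ℓ) fun E hE F hF hEF => ?_
  rw [Finset.mem_filter] at hE hF
  exact (hπ.2.2 E hE.1 F hF.1 hEF).2.isMinOf_iff_not hE.2 hF.2

end IsNCL

/-- Every element of `{1,...,n}` belongs to either exactly one or exactly two
blocks of a noncrossing linked partition `π` of `{1,...,n}`. -/
theorem NCL_singly_or_doubly_covered {n : ℕ} {π : Finset (Finset ℕ)}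
    (hπ : IsNCL n π) {ℓ : ℕ} (hℓ : ℓ ∈ Finset.Icc 1 n) :
    (π.filter (fun E => ℓ ∈ E)).card = 1 ∨ (π.filter (fun E => ℓ ∈ E)).card = 2 := by
  have h_pos := (hπ.filter_mem_nonempty hℓ).card_pos
  have h_le := hπ.card_filter_mem_le_two ℓ
  omega
end
end

section
/- Any two distinct blocks E, F of a noncrossing linked partition π of {1,...,n} have at most one element in common; moreover, if E ∩ F ≠ ∅ then both E and F have at least two elements. -/
attribute [local instance] Classical.propDecidable

noncomputable section

theorem IsMinOf.eq_of_mem {a b : ℕ} {E F : Finset ℕ} (ha : IsMinOf a E) (hb : IsMinOf b F)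
    (haF : a ∈ F) (hbE : b ∈ E) : a = b :=
  le_antisymm (ha.2 b hbE) (hb.2 a haF)

theorem isMinOf_of_card_le_one {a : ℕ} {E : Finset ℕ} (ha : a ∈ E) (hE : E.card ≤ 1) :
    IsMinOf a E :=
  ⟨ha, fun b hb => (Finset.card_le_one.mp hE a ha b hb).le⟩

theorem one_lt_card_of_not_isMinOf {a : ℕ} {E : Finset ℕ} (ha : a ∈ E) (h : ¬ IsMinOf a E) :
    1 < E.card :=
  lt_of_not_ge fun hE => h (isMinOf_of_card_le_one ha hE)

namespace NearlyDisjoint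

variable {E F : Finset ℕ}

theorem isMinOf_or_isMinOf (h : NearlyDisjoint E F) {a : ℕ} (ha : a ∈ E ∩ F) :
    IsMinOf a E ∨ IsMinOf a F := by
  rcases h a ha with ⟨haE, -, -⟩ | ⟨-, haF, -⟩
  exacts [Or.inl haE, Or.inr haF]

theorem card_inter_le_one (h : NearlyDisjoint E F) : (E ∩ F).card ≤ 1 := by
  refine Finset.card_le_one.mpr fun a ha b hb => ?_
  obtain ⟨haE, haF⟩ := Finset.mem_inter.mp ha
  obtain ⟨hbE, hbF⟩ := Finset.mem_inter.mp hb
  rcases h.isMinOf_or_isMinOf ha with ha_min | ha_min <;>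
    rcases h.isMinOf_or_isMinOf hb with hb_min | hb_min
  · exact ha_min.eq_of_mem hb_min haE hbE
  · exact ha_min.eq_of_mem hb_min haF hbE
  · exact (hb_min.eq_of_mem ha_min hbF haE).symm
  · exact ha_min.eq_of_mem hb_min haF hbF

theorem two_le_card_of_mem_inter (h : NearlyDisjoint E F) {a : ℕ} (ha : a ∈ E ∩ F) :
    2 ≤ E.card ∧ 2 ≤ F.card := by
  obtain ⟨haE, haF⟩ := Finset.mem_inter.mp ha
  rcases h a ha with ⟨-, hE, hF⟩ | ⟨hE, -, hF⟩
  · exact ⟨hE, one_lt_card_of_not_isMinOf haF hF⟩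
  · exact ⟨one_lt_card_of_not_isMinOf haE hE, hF⟩

end NearlyDisjoint

/-- Two distinct blocks of a noncrossing linked partition have at most one common
element; moreover, if they intersect then both have at least two elements. -/
theorem NCL_blocks_intersection {n : ℕ} {π : Finset (Finset ℕ)} (hπ : IsNCL n π)
    {E F : Finset ℕ} (hE : E ∈ π) (hF : F ∈ π) (hEF : E ≠ F) :
    (E ∩ F).card ≤ 1 ∧ ((E ∩ F).Nonempty → 2 ≤ E.card ∧ 2 ≤ F.card) := by
  have hnd : NearlyDisjoint E F := (hπ.2.2 E hE F hF hEF).2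
  exact ⟨hnd.card_inter_le_one, fun ⟨_, ha⟩ => hnd.two_le_card_of_mem_inter ha⟩
end
end

section
/- For n ≥ 2, the set NCL^{(1)}(n) of noncrossing linked partitions of {1,...,n} whose unlinking generates the full partition 1_n is in bijection with the set NC(n-1) of noncrossing partitions of {1,...,n-1}. In particular |NCL^{(1)}(n)| = c_{n-1}, the (n-1)-st Catalan number. -/
attribute [local instance] Classical.propDecidable

noncomputable section

/-- `σ` is the noncrossing partition generated by `π`: the smallest element of
`NC(n)` lying above `π` in the containment order. -/
def GeneratesNC (n : ℕ) (π σ : Finset (Finset ℕ)) : Prop :=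
  IsNC n σ ∧ NCLle π σ ∧ ∀ τ, IsNC n τ → NCLle π τ → NCLle σ τ


/-- The set `NCL⁽¹⁾(n)` of noncrossing linked partitions of `{1,...,n}` generating
the full partition `1ₙ = {{1,...,n}}`. -/
def NCLone (n : ℕ) : Finset (Finset (Finset ℕ)) :=
  (NCLset n).filter (fun π => GeneratesNC n π {Finset.Icc 1 n})

/-! ### Auxiliary lemmas -/

open Finset

section Aux

lemma crossing_mono {E E' F F' : Finset ℕ} (hE : E ⊆ E') (hF : F ⊆ F')
    (h : Crossing E F) : Crossing E' F' := by
  obtain ⟨i1, h1, i2, h2, j1, h3, j2, h4, l1, l2, l3⟩ := h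
  exact ⟨i1, hE h1, i2, hE h2, j1, hF h3, j2, hF h4, l1, l2, l3⟩

lemma not_crossing_singleton_left {a : ℕ} {F : Finset ℕ} : ¬ Crossing {a} F := by
  rintro ⟨i1, h1, i2, h2, j1, h3, j2, h4, l1, l2, l3⟩
  simp only [mem_singleton] at h1 h2
  omega

lemma not_crossing_singleton_right {a : ℕ} {F : Finset ℕ} : ¬ Crossing F {a} := by
  rintro ⟨i1, h1, i2, h2, j1, h3, j2, h4, l1, l2, l3⟩
  simp only [mem_singleton] at h3 h4
  omega

lemma not_crossing_Icc_left {a b : ℕ} {F : Finset ℕ} (hd : ∀ x ∈ F, x ∉ Finset.Icc a b) :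
    ¬ Crossing (Finset.Icc a b) F := by
  rintro ⟨i1, h1, i2, h2, j1, h3, j2, h4, l1, l2, l3⟩
  simp only [mem_Icc] at h1 h2
  exact hd j1 h3 (by simp only [mem_Icc]; omega)

lemma not_crossing_Icc_right {a b : ℕ} {F : Finset ℕ} (hd : ∀ x ∈ F, x ∉ Finset.Icc a b) :
    ¬ Crossing F (Finset.Icc a b) := by
  rintro ⟨i1, h1, i2, h2, j1, h3, j2, h4, l1, l2, l3⟩
  simp only [mem_Icc] at h3 h4
  exact hd i2 h2 (by simp only [mem_Icc]; omega)

lemma blocks_subset {π : Finset (Finset ℕ)} {S B : Finset ℕ}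
    (h : π.biUnion id = S) (hB : B ∈ π) : B ⊆ S := by
  subst h; exact fun x hx => Finset.mem_biUnion.2 ⟨B, hB, hx⟩

lemma mem_NCset_iff {n : ℕ} {π : Finset (Finset ℕ)} : π ∈ NCset n ↔ IsNC n π := by
  constructor
  · exact fun h => (Finset.mem_filter.1 h).2
  · intro h
    refine Finset.mem_filter.2 ⟨Finset.mem_powerset.2 ?_, h⟩
    intro B hB
    exact Finset.mem_powerset.2 (blocks_subset h.2.1 hB)

lemma mem_NCLset_iff {n : ℕ} {π : Finset (Finset ℕ)} : π ∈ NCLset n ↔ IsNCL n π := by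
  constructor
  · exact fun h => (Finset.mem_filter.1 h).2
  · intro h
    refine Finset.mem_filter.2 ⟨Finset.mem_powerset.2 ?_, h⟩
    intro B hB
    exact Finset.mem_powerset.2 (blocks_subset h.2.1 hB)

lemma mem_NCLone_iff {n : ℕ} {π : Finset (Finset ℕ)} :
    π ∈ NCLone n ↔ IsNCL n π ∧ GeneratesNC n π {Finset.Icc 1 n} := by
  unfold NCLone
  rw [Finset.mem_filter, mem_NCLset_iff]

end Aux

/-! ### Shift machinery -/

section Shift

/-- Shift a block up by `t`. -/
def shiftF (t : ℕ) (B : Finset ℕ) : Finset ℕ := B.image (fun x => x + t)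

/-- Shift a block down by `t`. -/
def unshiftF (t : ℕ) (B : Finset ℕ) : Finset ℕ := B.image (fun x => x - t)

/-- Shift a partition up by `t`. -/
def shiftP (t : ℕ) (π : Finset (Finset ℕ)) : Finset (Finset ℕ) := π.image (shiftF t)

/-- Shift a partition down by `t`. -/
def unshiftP (t : ℕ) (π : Finset (Finset ℕ)) : Finset (Finset ℕ) := π.image (unshiftF t)

lemma mem_shiftF {t x : ℕ} {B : Finset ℕ} : x ∈ shiftF t B ↔ ∃ y ∈ B, y + t = x := by
  simp [shiftF]

lemma unshiftF_shiftF (t : ℕ) (B : Finset ℕ) : unshiftF t (shiftF t B) = B := by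
  ext x
  simp only [unshiftF, shiftF, Finset.mem_image]
  constructor
  · rintro ⟨y, ⟨z, hz, rfl⟩, rfl⟩; simpa using hz
  · intro hx; exact ⟨x + t, ⟨x, hx, rfl⟩, by omega⟩

lemma shiftF_unshiftF {t : ℕ} {B : Finset ℕ} (h : ∀ x ∈ B, t ≤ x) :
    shiftF t (unshiftF t B) = B := by
  ext x
  simp only [unshiftF, shiftF, Finset.mem_image]
  constructor
  · rintro ⟨y, ⟨z, hz, rfl⟩, rfl⟩; have := h z hz; rwa [Nat.sub_add_cancel this]
  · intro hx; exact ⟨x - t, ⟨x, hx, rfl⟩, by have := h x hx; omega⟩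

lemma unshiftP_shiftP (t : ℕ) (π : Finset (Finset ℕ)) : unshiftP t (shiftP t π) = π := by
  unfold unshiftP shiftP
  rw [Finset.image_image]
  exact (Finset.image_congr (fun B _ => unshiftF_shiftF t B)).trans Finset.image_id

lemma shiftP_unshiftP {t : ℕ} {π : Finset (Finset ℕ)} (h : ∀ B ∈ π, ∀ x ∈ B, t ≤ x) :
    shiftP t (unshiftP t π) = π := by
  unfold unshiftP shiftP
  rw [Finset.image_image]
  exact (Finset.image_congr (fun B hB => shiftF_unshiftF (h B hB))).trans Finset.image_id

lemma crossing_shiftF {t : ℕ} {E F : Finset ℕ} (h : Crossing (shiftF t E) (shiftF t F)) :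
    Crossing E F := by
  obtain ⟨i1, h1, i2, h2, j1, h3, j2, h4, l1, l2, l3⟩ := h
  rw [mem_shiftF] at h1 h2 h3 h4
  obtain ⟨a, ha, rfl⟩ := h1; obtain ⟨b, hb, rfl⟩ := h2
  obtain ⟨c, hc, rfl⟩ := h3; obtain ⟨d, hd, rfl⟩ := h4
  exact ⟨a, ha, b, hb, c, hc, d, hd, by omega, by omega, by omega⟩

lemma crossing_unshiftF {t : ℕ} {E F : Finset ℕ} (hE : ∀ x ∈ E, t ≤ x) (hF : ∀ x ∈ F, t ≤ x)
    (h : Crossing (unshiftF t E) (unshiftF t F)) : Crossing E F := by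
  obtain ⟨i1, h1, i2, h2, j1, h3, j2, h4, l1, l2, l3⟩ := h
  simp only [unshiftF, Finset.mem_image] at h1 h2 h3 h4
  obtain ⟨a, ha, rfl⟩ := h1; obtain ⟨b, hb, rfl⟩ := h2
  obtain ⟨c, hc, rfl⟩ := h3; obtain ⟨d, hd, rfl⟩ := h4
  have := hE a ha; have := hE b hb; have := hF c hc; have := hF d hd
  exact ⟨a, ha, b, hb, c, hc, d, hd, by omega, by omega, by omega⟩

lemma disjoint_shiftF {t : ℕ} {E F : Finset ℕ} (h : Disjoint E F) :
    Disjoint (shiftF t E) (shiftF t F) := by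
  rw [Finset.disjoint_left] at h ⊢
  intro x hx hx'
  rw [mem_shiftF] at hx hx'
  obtain ⟨a, ha, rfl⟩ := hx; obtain ⟨b, hb, hab⟩ := hx'
  have : b = a := by omega
  exact h ha (this ▸ hb)

lemma disjoint_unshiftF {t : ℕ} {E F : Finset ℕ} (hE : ∀ x ∈ E, t ≤ x) (hF : ∀ x ∈ F, t ≤ x)
    (h : Disjoint E F) : Disjoint (unshiftF t E) (unshiftF t F) := by
  rw [Finset.disjoint_left] at h ⊢
  intro x hx hx'
  simp only [unshiftF, Finset.mem_image] at hx hx'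
  obtain ⟨a, ha, rfl⟩ := hx; obtain ⟨b, hb, hab⟩ := hx'
  have := hE a ha; have := hF b hb
  have : b = a := by omega
  exact h ha (this ▸ hb)

lemma biUnion_shiftP (t : ℕ) (π : Finset (Finset ℕ)) :
    (shiftP t π).biUnion id = shiftF t (π.biUnion id) := by
  ext x
  simp only [shiftP, shiftF, Finset.mem_biUnion, Finset.mem_image, id]
  constructor
  · rintro ⟨B, ⟨C, hC, rfl⟩, hx⟩
    obtain ⟨y, hy, rfl⟩ := Finset.mem_image.1 hx
    exact ⟨y, ⟨C, hC, hy⟩, rfl⟩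
  · rintro ⟨y, ⟨C, hC, hy⟩, rfl⟩
    exact ⟨C.image (fun x => x + t), ⟨C, hC, rfl⟩, Finset.mem_image.2 ⟨y, hy, rfl⟩⟩

lemma biUnion_unshiftP (t : ℕ) (π : Finset (Finset ℕ)) :
    (unshiftP t π).biUnion id = unshiftF t (π.biUnion id) := by
  ext x
  simp only [unshiftP, unshiftF, Finset.mem_biUnion, Finset.mem_image, id]
  constructor
  · rintro ⟨B, ⟨C, hC, rfl⟩, hx⟩
    obtain ⟨y, hy, rfl⟩ := Finset.mem_image.1 hx
    exact ⟨y, ⟨C, hC, hy⟩, rfl⟩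
  · rintro ⟨y, ⟨C, hC, hy⟩, rfl⟩
    exact ⟨C.image (fun x => x - t), ⟨C, hC, rfl⟩, Finset.mem_image.2 ⟨y, hy, rfl⟩⟩

lemma shiftF_Icc (t a b : ℕ) : shiftF t (Finset.Icc a b) = Finset.Icc (a + t) (b + t) := by
  unfold shiftF
  ext x
  simp only [Finset.mem_image, Finset.mem_Icc]
  constructor
  · rintro ⟨y, hy, rfl⟩; omega
  · intro hx; exact ⟨x - t, by omega, by omega⟩

lemma unshiftF_Icc {t a b : ℕ} (h : t < a) :
    unshiftF t (Finset.Icc a b) = Finset.Icc (a - t) (b - t) := by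
  unfold unshiftF
  ext x
  simp only [Finset.mem_image, Finset.mem_Icc]
  constructor
  · rintro ⟨y, hy, rfl⟩; omega
  · intro hx; exact ⟨x + t, by omega, by omega⟩

end Shift

/-! ### Noncrossing partitions of a general interval -/

section NCon

/-- noncrossing partition of `{a,...,b}` -/
def IsNCon (a b : ℕ) (π : Finset (Finset ℕ)) : Prop :=
  (∀ E ∈ π, E.Nonempty) ∧ π.biUnion id = Finset.Icc a b ∧
    ∀ E ∈ π, ∀ F ∈ π, E ≠ F → Disjoint E F ∧ ¬ Crossing E F

lemma isNC_iff {n : ℕ} {π : Finset (Finset ℕ)} : IsNC n π ↔ IsNCon 1 n π := Iff.rfl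

lemma IsNCon.elem_bound {a b : ℕ} {π : Finset (Finset ℕ)} (h : IsNCon a b π) :
    ∀ B ∈ π, ∀ x ∈ B, a ≤ x ∧ x ≤ b := by
  intro B hB x hx
  have := blocks_subset h.2.1 hB hx
  rw [Finset.mem_Icc] at this
  exact this

lemma IsNCon.shiftP {a b t : ℕ} {π : Finset (Finset ℕ)} (h : IsNCon a b π) :
    IsNCon (a + t) (b + t) (shiftP t π) := by
  obtain ⟨hne, hcov, hpw⟩ := h
  refine ⟨?_, ?_, ?_⟩
  · intro E hE
    obtain ⟨B, hB, rfl⟩ := Finset.mem_image.1 hE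
    exact (hne B hB).image _
  · rw [biUnion_shiftP, hcov, shiftF_Icc]
  · intro E hE F hF hEF
    obtain ⟨B, hB, rfl⟩ := Finset.mem_image.1 hE
    obtain ⟨C, hC, rfl⟩ := Finset.mem_image.1 hF
    have hBC : B ≠ C := fun h => hEF (by rw [h])
    exact ⟨disjoint_shiftF (hpw B hB C hC hBC).1,
      fun hc => (hpw B hB C hC hBC).2 (crossing_shiftF hc)⟩

lemma IsNCon.unshiftP {a b t : ℕ} {π : Finset (Finset ℕ)} (ht : t < a) (h : IsNCon a b π) :
    IsNCon (a - t) (b - t) (unshiftP t π) := by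
  have hbd : ∀ B ∈ π, ∀ x ∈ B, t ≤ x := by
    intro B hB x hx
    have := h.elem_bound B hB x hx
    omega
  obtain ⟨hne, hcov, hpw⟩ := h
  refine ⟨?_, ?_, ?_⟩
  · intro E hE
    obtain ⟨B, hB, rfl⟩ := Finset.mem_image.1 hE
    exact (hne B hB).image _
  · rw [biUnion_unshiftP, hcov, unshiftF_Icc ht]
  · intro E hE F hF hEF
    obtain ⟨B, hB, rfl⟩ := Finset.mem_image.1 hE
    obtain ⟨C, hC, rfl⟩ := Finset.mem_image.1 hF
    have hBC : B ≠ C := fun h => hEF (by rw [h])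
    exact ⟨disjoint_unshiftF (hbd B hB) (hbd C hC) (hpw B hB C hC hBC).1,
      fun hc => (hpw B hB C hC hBC).2 (crossing_unshiftF (hbd B hB) (hbd C hC) hc)⟩

end NCon

/-! ### Counting infrastructure -/

section Count

lemma IsNCon.eq_empty {a b : ℕ} {π : Finset (Finset ℕ)} (hab : b < a) (h : IsNCon a b π) :
    π = ∅ := by
  rw [Finset.eq_empty_iff_forall_notMem]
  intro B hB
  obtain ⟨x, hx⟩ := h.1 B hB
  have := h.elem_bound B hB x hx
  omega

lemma exists_block {a b x : ℕ} {π : Finset (Finset ℕ)} (h : IsNCon a b π)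
    (hx : x ∈ Finset.Icc a b) : ∃ B ∈ π, x ∈ B := by
  rw [← h.2.1] at hx
  simpa using hx

lemma block_eq_of_mem {a b x : ℕ} {π : Finset (Finset ℕ)} {B C : Finset ℕ} (h : IsNCon a b π)
    (hB : B ∈ π) (hC : C ∈ π) (hxB : x ∈ B) (hxC : x ∈ C) : B = C := by
  by_contra hne
  exact Finset.disjoint_left.1 ((h.2.2 B hB C hC hne).1) hxB hxC

lemma not_crossing_of_sep {E F : Finset ℕ} {k : ℕ} (hE : ∀ x ∈ E, x < k)
    (hF : ∀ x ∈ F, k ≤ x) : ¬ Crossing E F := by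
  rintro ⟨i1, h1, i2, h2, j1, h3, j2, h4, l1, l2, l3⟩
  have := hE i2 h2; have := hF j1 h3
  omega

lemma not_crossing_of_sep' {E F : Finset ℕ} {k : ℕ} (hE : ∀ x ∈ E, k ≤ x)
    (hF : ∀ x ∈ F, x < k) : ¬ Crossing E F := by
  rintro ⟨i1, h1, i2, h2, j1, h3, j2, h4, l1, l2, l3⟩
  have := hE i1 h1; have := hF j1 h3
  omega

/-- The union of the blocks containing `1`. -/
def blockOf1 (π : Finset (Finset ℕ)) : Finset ℕ := (π.filter (fun B => 1 ∈ B)).biUnion id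

lemma blockOf1_eq {a b : ℕ} {π : Finset (Finset ℕ)} {B : Finset ℕ} (h : IsNCon a b π)
    (hB : B ∈ π) (h1 : 1 ∈ B) : blockOf1 π = B := by
  apply Finset.Subset.antisymm
  · intro x hx
    simp only [blockOf1, Finset.mem_biUnion, Finset.mem_filter, id] at hx
    obtain ⟨C, ⟨hC, h1C⟩, hxC⟩ := hx
    rwa [block_eq_of_mem h hC hB h1C h1] at hxC
  · intro x hx
    simp only [blockOf1, Finset.mem_biUnion, Finset.mem_filter, id]
    exact ⟨B, ⟨hB, h1⟩, hx⟩

/-- The statistic: second-smallest element of the block of `1`, `m+2` if the block of `1`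
is a singleton. -/
def Jstat (m : ℕ) (π : Finset (Finset ℕ)) : ℕ :=
  if h : ((blockOf1 π).erase 1).Nonempty then ((blockOf1 π).erase 1).min' h else m + 2

lemma Jstat_mem {m : ℕ} {π : Finset (Finset ℕ)} (h : IsNC (m+1) π) :
    Jstat m π ∈ Finset.Icc 2 (m+2) := by
  rw [isNC_iff] at h
  unfold Jstat
  split_ifs with hne
  · set x := ((blockOf1 π).erase 1).min' hne with hxdef
    have hmem : x ∈ (blockOf1 π).erase 1 := Finset.min'_mem _ hne
    have h1 : x ≠ 1 := Finset.ne_of_mem_erase hmem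
    have h2 : x ∈ blockOf1 π := Finset.erase_subset 1 (blockOf1 π) hmem
    obtain ⟨B, hB, h1B⟩ := exists_block h (Finset.mem_Icc.2 ⟨le_refl 1, by omega⟩)
    rw [blockOf1_eq h hB h1B] at h2
    have := h.elem_bound B hB _ h2
    simp only [Finset.mem_Icc]
    omega
  · simp only [Finset.mem_Icc]; omega

end Count

/-! ### Gluing and splitting noncrossing partitions -/

section Glue

/-- Glue two partitions: `A` on `{2,...,j-1}`, `D` on `{j,...,m+1}`, attaching `1`
to the block of `j` (or as a singleton if there is none). -/
def glueC (j : ℕ) (A D : Finset (Finset ℕ)) : Finset (Finset ℕ) :=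
  A ∪ D.filter (fun C => j ∉ C) ∪ {insert 1 ((D.filter (fun C => j ∈ C)).biUnion id)}

def glueP (j : ℕ) (τ₁ τ₂ : Finset (Finset ℕ)) : Finset (Finset ℕ) :=
  glueC j (shiftP 1 τ₁) (shiftP (j-1) τ₂)

def splitP (m j : ℕ) (π : Finset (Finset ℕ)) : Finset (Finset ℕ) × Finset (Finset ℕ) :=
  (unshiftP 1 (π.filter (fun B => B ⊆ Finset.Icc 2 (j-1))),
   unshiftP (j-1) ((π.image (fun B => B.erase 1)).filter
     (fun C => C.Nonempty ∧ C ⊆ Finset.Icc j (m+1))))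

lemma mem_glueC {j : ℕ} {A D : Finset (Finset ℕ)} {E : Finset ℕ} :
    E ∈ glueC j A D ↔ E ∈ A ∨ (E ∈ D ∧ j ∉ E) ∨
      E = insert 1 ((D.filter (fun C => j ∈ C)).biUnion id) := by
  simp only [glueC, Finset.mem_union, Finset.mem_filter, Finset.mem_singleton]
  tauto

lemma glue_core {m j : ℕ} (hj2 : 2 ≤ j) (hjm : j ≤ m+2) {A D : Finset (Finset ℕ)}
    (hA : IsNCon 2 (j-1) A) (hD : IsNCon j (m+1) D) :
    IsNC (m+1) (glueC j A D) ∧ Jstat m (glueC j A D) = j := by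
  classical
  set X : Finset ℕ := (D.filter (fun C => j ∈ C)).biUnion id with hXdef
  have hXmem : ∀ x, x ∈ X ↔ ∃ C ∈ D, j ∈ C ∧ x ∈ C := by
    intro x
    simp only [hXdef, Finset.mem_biUnion, Finset.mem_filter, id]
    tauto
  have hXsub : ∀ x ∈ X, j ≤ x ∧ x ≤ m + 1 := by
    intro x hx
    obtain ⟨C, hC, _, hxC⟩ := (hXmem x).1 hx
    exact hD.elem_bound C hC x hxC
  have hX1 : (1:ℕ) ∉ X := fun h => by have := hXsub 1 h; omega
  have hXj : j ≤ m + 1 → j ∈ X := by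
    intro hjm1
    obtain ⟨C, hC, hjC⟩ := exists_block hD (Finset.mem_Icc.2 ⟨le_refl j, hjm1⟩)
    exact (hXmem j).2 ⟨C, hC, hjC, hjC⟩
  have hXe : j = m + 2 → X = ∅ := by
    intro hj
    have : D = ∅ := hD.eq_empty (by omega)
    rw [Finset.eq_empty_iff_forall_notMem]
    intro x hx
    obtain ⟨C, hC, _, _⟩ := (hXmem x).1 hx
    rw [this] at hC
    exact absurd hC (Finset.notMem_empty _)
  have hAsub : ∀ E ∈ A, ∀ x ∈ E, 2 ≤ x ∧ x ≤ j - 1 := hA.elem_bound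
  have hDsub : ∀ E ∈ D, ∀ x ∈ E, j ≤ x ∧ x ≤ m + 1 := hD.elem_bound
  -- key pairwise facts
  have keyAD : ∀ E ∈ A, ∀ C ∈ D, Disjoint E C ∧ ¬ Crossing E C ∧ ¬ Crossing C E := by
    intro E hE C hC
    refine ⟨Finset.disjoint_left.2 fun x hxE hxC =>
      by have := hAsub E hE x hxE; have := hDsub C hC x hxC; omega, ?_, ?_⟩
    · exact not_crossing_of_sep (k := j) (fun x hx => by have := hAsub E hE x hx; omega)
        (fun x hx => (hDsub C hC x hx).1)
    · exact not_crossing_of_sep' (k := j) (fun x hx => (hDsub C hC x hx).1)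
        (fun x hx => by have := hAsub E hE x hx; omega)
  have keyA : ∀ E ∈ A, Disjoint E (insert 1 X) ∧ ¬ Crossing E (insert 1 X)
      ∧ ¬ Crossing (insert 1 X) E := by
    intro E hE
    refine ⟨?_, ?_, ?_⟩
    · rw [Finset.disjoint_left]
      intro x hxE hxB
      have h2 := hAsub E hE x hxE
      rcases Finset.mem_insert.1 hxB with h | h
      · omega
      · have := hXsub x h; omega
    · rintro ⟨i1, h1, i2, h2, j1, h3, j2, h4, l1, l2, l3⟩
      have hi1 := hAsub E hE i1 h1
      have hi2 := hAsub E hE i2 h2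
      rcases Finset.mem_insert.1 h3 with h | h
      · omega
      · have := hXsub j1 h; omega
    · rintro ⟨i1, h1, i2, h2, j1, h3, j2, h4, l1, l2, l3⟩
      have hj1 := hAsub E hE j1 h3
      have hj2 := hAsub E hE j2 h4
      rcases Finset.mem_insert.1 h2 with h | h
      · omega
      · have := hXsub i2 h; omega
  have keyD : ∀ E ∈ D, j ∉ E → Disjoint E (insert 1 X) ∧ ¬ Crossing E (insert 1 X)
      ∧ ¬ Crossing (insert 1 X) E := by
    intro E hE hjE
    have hEX : ∀ C ∈ D, j ∈ C → E ≠ C := fun C _ hjC h => hjE (h ▸ hjC)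
    refine ⟨?_, ?_, ?_⟩
    · rw [Finset.disjoint_left]
      intro x hxE hxB
      rcases Finset.mem_insert.1 hxB with h | h
      · have := hDsub E hE x hxE; omega
      · obtain ⟨C, hC, hjC, hxC⟩ := (hXmem x).1 h
        exact Finset.disjoint_left.1 ((hD.2.2 E hE C hC (hEX C hC hjC)).1) hxE hxC
    · rintro ⟨i1, h1, i2, h2, j1, h3, j2, h4, l1, l2, l3⟩
      have hij : j ≤ i1 := (hDsub E hE i1 h1).1
      rcases Finset.mem_insert.1 h3 with h | h
      · omega
      · obtain ⟨C, hC, hjC, hj1C⟩ := (hXmem j1).1 h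
        have hj2X : j2 ∈ X := by
          rcases Finset.mem_insert.1 h4 with h' | h'
          · omega
          · exact h'
        obtain ⟨C', hC', hjC', hj2C⟩ := (hXmem j2).1 hj2X
        have : C' = C := block_eq_of_mem hD hC' hC hjC' hjC
        subst this
        exact (hD.2.2 E hE C' hC' (hEX C' hC' hjC')).2
          ⟨i1, h1, i2, h2, j1, hj1C, j2, hj2C, l1, l2, l3⟩
    · rintro ⟨i1, h1, i2, h2, j1, h3, j2, h4, l1, l2, l3⟩
      have hj1E := hDsub E hE j1 h3
      have hj1j : j < j1 := by
        rcases Nat.lt_or_ge j j1 with h | h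
        · exact h
        · have : j1 = j := by omega
          exact absurd (this ▸ h3) hjE
      have hi2X : i2 ∈ X := by
        rcases Finset.mem_insert.1 h2 with h' | h'
        · omega
        · exact h'
      obtain ⟨C, hC, hjC, hi2C⟩ := (hXmem i2).1 hi2X
      have hCE : C ≠ E := fun h => hjE (h ▸ hjC)
      rcases Finset.mem_insert.1 h1 with h' | h'
      · -- i1 = 1 : use j ∈ C instead
        exact (hD.2.2 C hC E hE hCE).2 ⟨j, hjC, i2, hi2C, j1, h3, j2, h4, hj1j, l2, l3⟩
      · obtain ⟨C', hC', hjC', hi1C⟩ := (hXmem i1).1 h'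
        have : C' = C := block_eq_of_mem hD hC' hC hjC' hjC
        subst this
        exact (hD.2.2 C' hC' E hE hCE).2 ⟨i1, hi1C, i2, hi2C, j1, h3, j2, h4, l1, l2, l3⟩
  have hglue : IsNC (m+1) (glueC j A D) := by
    refine ⟨?_, ?_, ?_⟩
    · intro E hE
      rcases mem_glueC.1 hE with h | h | h
      · exact hA.1 E h
      · exact hD.1 E h.1
      · exact h ▸ ⟨1, Finset.mem_insert_self 1 X⟩
    · ext x
      simp only [Finset.mem_biUnion, id, Finset.mem_Icc]
      constructor
      · rintro ⟨E, hE, hxE⟩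
        rcases mem_glueC.1 hE with h | h | h
        · have := hAsub E h x hxE; omega
        · have := hDsub E h.1 x hxE; omega
        · subst h
          rcases Finset.mem_insert.1 hxE with h | h
          · omega
          · have := hXsub x h; omega
      · intro hx
        rcases Nat.lt_or_ge x 2 with h1 | h1
        · have hx1 : x = 1 := by omega
          refine ⟨insert 1 X, mem_glueC.2 (Or.inr (Or.inr rfl)), ?_⟩
          rw [hx1]; exact Finset.mem_insert_self 1 X
        · rcases Nat.lt_or_ge x j with h2 | h2
          · obtain ⟨E, hE, hxE⟩ := exists_block hA (Finset.mem_Icc.2 ⟨h1, by omega⟩)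
            exact ⟨E, mem_glueC.2 (Or.inl hE), hxE⟩
          · obtain ⟨C, hC, hxC⟩ := exists_block hD (Finset.mem_Icc.2 ⟨h2, by omega⟩)
            by_cases hjC : j ∈ C
            · refine ⟨insert 1 X, mem_glueC.2 (Or.inr (Or.inr rfl)), ?_⟩
              exact Finset.mem_insert_of_mem ((hXmem x).2 ⟨C, hC, hjC, hxC⟩)
            · exact ⟨C, mem_glueC.2 (Or.inr (Or.inl ⟨hC, hjC⟩)), hxC⟩
    · intro E hE F hF hEF
      rcases mem_glueC.1 hE with h | h | h <;> rcases mem_glueC.1 hF with h' | h' | h'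
      · exact hA.2.2 E h F h' hEF
      · obtain ⟨k1, k2, k3⟩ := keyAD E h F h'.1
        exact ⟨k1, k2⟩
      · subst h'
        obtain ⟨k1, k2, k3⟩ := keyA E h
        exact ⟨k1, k2⟩
      · obtain ⟨k1, k2, k3⟩ := keyAD F h' E h.1
        exact ⟨k1.symm, k3⟩
      · exact hD.2.2 E h.1 F h'.1 hEF
      · subst h'
        obtain ⟨k1, k2, k3⟩ := keyD E h.1 h.2
        exact ⟨k1, k2⟩
      · subst h
        obtain ⟨k1, k2, k3⟩ := keyA F h'
        exact ⟨k1.symm, k3⟩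
      · subst h
        obtain ⟨k1, k2, k3⟩ := keyD F h'.1 h'.2
        exact ⟨k1.symm, k3⟩
      · subst h; subst h'; exact absurd rfl hEF
  refine ⟨hglue, ?_⟩
  have hb : blockOf1 (glueC j A D) = insert 1 X :=
    blockOf1_eq (isNC_iff.1 hglue) (mem_glueC.2 (Or.inr (Or.inr rfl)))
      (Finset.mem_insert_self 1 X)
  have herase : (insert 1 X).erase 1 = X := Finset.erase_insert hX1
  unfold Jstat
  rw [hb, herase]
  rcases Nat.lt_or_ge (m+1) j with hj | hj
  · have hjx : j = m + 2 := by omega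
    rw [dif_neg (by rw [hXe hjx]; exact Finset.not_nonempty_empty)]
    omega
  · have hjX := hXj hj
    rw [dif_pos ⟨j, hjX⟩]
    refine le_antisymm (Finset.min'_le _ j hjX) (Finset.le_min' _ _ _ ?_)
    intro y hy
    exact (hXsub y hy).1

end Glue

/-! ### Structure of partitions in a fiber, and splitting -/

section Split

lemma fiber_structure {m j : ℕ} {π : Finset (Finset ℕ)} (hπ : IsNC (m+1) π)
    (hJ : Jstat m π = j) (hj2 : 2 ≤ j) :
    ∃ B₀ ∈ π, 1 ∈ B₀ ∧ (∀ x ∈ B₀, x = 1 ∨ j ≤ x) ∧ (j ≤ m+1 → j ∈ B₀) ∧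
      (∀ B ∈ π, B ≠ B₀ → B ⊆ Finset.Icc 2 (j-1) ∨ B ⊆ Finset.Icc j (m+1)) ∧
      blockOf1 π = B₀ := by
  have h := isNC_iff.1 hπ
  obtain ⟨B₀, hB₀, h1B₀⟩ := exists_block h (Finset.mem_Icc.2 ⟨le_refl 1, by omega⟩)
  have hbo : blockOf1 π = B₀ := blockOf1_eq h hB₀ h1B₀
  have huniq : ∀ B ∈ π, 1 ∈ B → B = B₀ := fun B hB h1B => block_eq_of_mem h hB hB₀ h1B h1B₀
  have hmain : (∀ x ∈ B₀, x = 1 ∨ j ≤ x) ∧ (j ≤ m+1 → j ∈ B₀) := by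
    unfold Jstat at hJ
    rw [hbo] at hJ
    split_ifs at hJ with hne
    · constructor
      · intro x hx
        by_cases hx1 : x = 1
        · exact Or.inl hx1
        · right
          rw [← hJ]
          exact Finset.min'_le _ x (Finset.mem_erase.2 ⟨hx1, hx⟩)
      · intro _
        have := Finset.min'_mem _ hne
        rw [hJ] at this
        exact Finset.mem_of_mem_erase this
    · have hB1 : ∀ x ∈ B₀, x = 1 := by
        intro x hx
        by_contra hx1
        exact hne ⟨x, Finset.mem_erase.2 ⟨hx1, hx⟩⟩
      constructor
      · intro x hx; exact Or.inl (hB1 x hx)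
      · intro hjm1; omega
  refine ⟨B₀, hB₀, h1B₀, hmain.1, hmain.2, ?_, hbo⟩
  intro B hB hBne
  have h1B : 1 ∉ B := fun h1 => hBne (huniq B hB h1)
  have hBsub : ∀ x ∈ B, 2 ≤ x ∧ x ≤ m + 1 := by
    intro x hx
    have := h.elem_bound B hB x hx
    have : x ≠ 1 := fun he => h1B (he ▸ hx)
    omega
  by_cases hleft : ∀ x ∈ B, x ≤ j - 1
  · left
    intro x hx
    exact Finset.mem_Icc.2 ⟨(hBsub x hx).1, hleft x hx⟩
  · right
    push_neg at hleft
    obtain ⟨b, hb, hbj⟩ := hleft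
    have hbj' : j < b := by
      rcases Nat.lt_or_ge j b with h' | h'
      · exact h'
      · have hbe : b = j := by omega
        have hjB₀ : j ∈ B₀ := hmain.2 (by have := hBsub b hb; omega)
        exact absurd (block_eq_of_mem h hB hB₀ (hbe ▸ hb) hjB₀) hBne
    have hjB₀ : j ∈ B₀ := hmain.2 (by have := hBsub b hb; omega)
    intro x hx
    rcases Nat.lt_or_ge x j with h' | h'
    · exfalso
      have hx2 := hBsub x hx
      exact (h.2.2 B₀ hB₀ B hB (Ne.symm hBne)).2
        ⟨1, h1B₀, j, hjB₀, x, hx, b, hb, by omega, h', hbj'⟩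
    · exact Finset.mem_Icc.2 ⟨h', (hBsub x hx).2⟩

lemma split_filter1 {m j : ℕ} {π : Finset (Finset ℕ)} (hπ : IsNC (m+1) π)
    (hJ : Jstat m π = j) (hj2 : 2 ≤ j) (hjm : j ≤ m+2) :
    IsNCon 2 (j-1) (π.filter (fun B => B ⊆ Finset.Icc 2 (j-1))) := by
  obtain ⟨B₀, hB₀, h1B₀, hBels, hjB₀, hdich, hbo⟩ := fiber_structure hπ hJ hj2
  have h := isNC_iff.1 hπ
  refine ⟨?_, ?_, ?_⟩
  · intro E hE; exact h.1 E (Finset.filter_subset _ _ hE)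
  · ext x
    simp only [Finset.mem_biUnion, Finset.mem_filter, id, Finset.mem_Icc]
    constructor
    · rintro ⟨E, ⟨hE, hEs⟩, hxE⟩
      have := Finset.mem_Icc.1 (hEs hxE)
      omega
    · intro hx
      obtain ⟨hx1, hx2⟩ := hx
      have hxm : x ∈ Finset.Icc 1 (m+1) := Finset.mem_Icc.2 ⟨by omega, by omega⟩
      obtain ⟨B, hB, hxB⟩ := exists_block h hxm
      have hBne : B ≠ B₀ := by
        intro he
        subst he
        rcases hBels x hxB with h' | h' <;> omega
      rcases hdich B hB hBne with h' | h'
      · exact ⟨B, ⟨hB, h'⟩, hxB⟩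
      · have := Finset.mem_Icc.1 (h' hxB); omega
  · intro E hE F hF hEF
    exact h.2.2 E (Finset.filter_subset _ _ hE) F (Finset.filter_subset _ _ hF) hEF

lemma split_filter2 {m j : ℕ} {π : Finset (Finset ℕ)} (hπ : IsNC (m+1) π)
    (hJ : Jstat m π = j) (hj2 : 2 ≤ j) (hjm : j ≤ m+2) :
    IsNCon j (m+1) ((π.image (fun B => B.erase 1)).filter
      (fun C => C.Nonempty ∧ C ⊆ Finset.Icc j (m+1))) := by
  obtain ⟨B₀, hB₀, h1B₀, hBels, hjB₀, hdich, hbo⟩ := fiber_structure hπ hJ hj2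
  have h := isNC_iff.1 hπ
  refine ⟨?_, ?_, ?_⟩
  · intro E hE
    exact (Finset.mem_filter.1 hE).2.1
  · ext x
    simp only [Finset.mem_biUnion, Finset.mem_filter, Finset.mem_image, id]
    constructor
    · rintro ⟨C, ⟨_, _, hCs⟩, hxC⟩
      exact hCs hxC
    · intro hx
      have hx' := Finset.mem_Icc.1 hx
      obtain ⟨B, hB, hxB⟩ := exists_block h (Finset.mem_Icc.2 ⟨by omega, hx'.2⟩)
      refine ⟨B.erase 1, ⟨⟨B, hB, rfl⟩, ⟨x, Finset.mem_erase.2 ⟨by omega, hxB⟩⟩, ?_⟩,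
        Finset.mem_erase.2 ⟨by omega, hxB⟩⟩
      by_cases hBne : B = B₀
      · subst hBne
        intro y hy
        have hy' := Finset.mem_erase.1 hy
        rcases hBels y hy'.2 with h' | h'
        · exact absurd h' hy'.1
        · exact Finset.mem_Icc.2 ⟨h', (h.elem_bound B hB y hy'.2).2⟩
      · rcases hdich B hB hBne with h' | h'
        · exfalso
          have := Finset.mem_Icc.1 (h' hxB)
          omega
        · intro y hy
          exact h' (Finset.mem_of_mem_erase hy)
  · intro E hE F hF hEF
    obtain ⟨hE1, -⟩ := Finset.mem_filter.1 hE
    obtain ⟨hF1, -⟩ := Finset.mem_filter.1 hF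
    obtain ⟨B, hB, rfl⟩ := Finset.mem_image.1 hE1
    obtain ⟨C, hC, rfl⟩ := Finset.mem_image.1 hF1
    have hBC : B ≠ C := fun he => hEF (by rw [he])
    refine ⟨?_, ?_⟩
    · exact Finset.disjoint_of_subset_left (Finset.erase_subset _ _)
        (Finset.disjoint_of_subset_right (Finset.erase_subset _ _) (h.2.2 B hB C hC hBC).1)
    · intro hc
      exact (h.2.2 B hB C hC hBC).2
        (crossing_mono (Finset.erase_subset _ _) (Finset.erase_subset _ _) hc)

lemma split_mem {m j : ℕ} (hj2 : 2 ≤ j) (hjm : j ≤ m+2) {π : Finset (Finset ℕ)}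
    (hπ : IsNC (m+1) π) (hJ : Jstat m π = j) :
    IsNCon 1 (j-2) (splitP m j π).1 ∧ IsNCon 1 (m+2-j) (splitP m j π).2 := by
  constructor
  · have := (split_filter1 hπ hJ hj2 hjm).unshiftP (t := 1) (by omega)
    rwa [show 2 - 1 = 1 from rfl, show j - 1 - 1 = j - 2 by omega] at this
  · have := (split_filter2 hπ hJ hj2 hjm).unshiftP (t := j - 1) (by omega)
    rwa [show j - (j-1) = 1 by omega, show m + 1 - (j-1) = m + 2 - j by omega] at this

end Split

/-! ### glue and split are inverse to each other -/

section Inverses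

lemma Xblock {j b : ℕ} {D : Finset (Finset ℕ)} (hD : IsNCon j b D) {C : Finset ℕ}
    (hC : C ∈ D) (hjC : j ∈ C) : (D.filter (fun C => j ∈ C)).biUnion id = C := by
  apply Finset.Subset.antisymm
  · intro y hy
    simp only [Finset.mem_biUnion, Finset.mem_filter, id] at hy
    obtain ⟨C', ⟨hC', hjC'⟩, hyC'⟩ := hy
    rwa [block_eq_of_mem hD hC' hC hjC' hjC] at hyC'
  · intro y hy
    simp only [Finset.mem_biUnion, Finset.mem_filter, id]
    exact ⟨C, ⟨hC, hjC⟩, hy⟩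

lemma glue_shifts {m j : ℕ} (hj2 : 2 ≤ j) (hjm : j ≤ m+2) {τ₁ τ₂ : Finset (Finset ℕ)}
    (h₁ : IsNCon 1 (j-2) τ₁) (h₂ : IsNCon 1 (m+2-j) τ₂) :
    IsNCon 2 (j-1) (shiftP 1 τ₁) ∧ IsNCon j (m+1) (shiftP (j-1) τ₂) := by
  constructor
  · have := h₁.shiftP (t := 1)
    rwa [show (1:ℕ)+1 = 2 from rfl, show j-2+1 = j-1 by omega] at this
  · have := h₂.shiftP (t := j-1)
    rwa [show 1+(j-1) = j by omega, show m+2-j+(j-1) = m+1 by omega] at this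

lemma split_glue {m j : ℕ} (hj2 : 2 ≤ j) (hjm : j ≤ m+2) {τ₁ τ₂ : Finset (Finset ℕ)}
    (h₁ : IsNCon 1 (j-2) τ₁) (h₂ : IsNCon 1 (m+2-j) τ₂) :
    splitP m j (glueP j τ₁ τ₂) = (τ₁, τ₂) := by
  obtain ⟨hA, hD⟩ := glue_shifts hj2 hjm h₁ h₂
  set A := shiftP 1 τ₁ with hAdef
  set D := shiftP (j-1) τ₂ with hDdef
  have hAsub := hA.elem_bound
  have hDsub := hD.elem_bound
  have hfil1 : (glueC j A D).filter (fun B => B ⊆ Finset.Icc 2 (j-1)) = A := by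
    ext E
    rw [Finset.mem_filter]
    constructor
    · rintro ⟨hE, hEs⟩
      rcases mem_glueC.1 hE with h | h | h
      · exact h
      · exfalso
        obtain ⟨x, hx⟩ := hD.1 E h.1
        have := (hDsub E h.1 x hx).1
        have := Finset.mem_Icc.1 (hEs hx)
        omega
      · exfalso
        have h1E : (1:ℕ) ∈ E := h ▸ Finset.mem_insert_self 1 _
        have := Finset.mem_Icc.1 (hEs h1E)
        omega
    · intro hE
      refine ⟨mem_glueC.2 (Or.inl hE), ?_⟩
      intro x hx
      exact Finset.mem_Icc.2 (hAsub E hE x hx)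
  have hfil2 : ((glueC j A D).image (fun B => B.erase 1)).filter
      (fun C => C.Nonempty ∧ C ⊆ Finset.Icc j (m+1)) = D := by
    ext C
    rw [Finset.mem_filter]
    constructor
    · rintro ⟨hC1, hC2, hC3⟩
      obtain ⟨E, hE, rfl⟩ := Finset.mem_image.1 hC1
      rcases mem_glueC.1 hE with h | h | h
      · exfalso
        have h1E : (1:ℕ) ∉ E := fun h1 => by have := (hAsub E h 1 h1).1; omega
        rw [Finset.erase_eq_of_notMem h1E] at hC2 hC3
        obtain ⟨x, hx⟩ := hC2
        have := (hAsub E h x hx).2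
        have := Finset.mem_Icc.1 (hC3 hx)
        omega
      · have h1E : (1:ℕ) ∉ E := fun h1 => by have := (hDsub E h.1 1 h1).1; omega
        rw [Finset.erase_eq_of_notMem h1E]
        exact h.1
      · subst h
        rw [Finset.erase_insert (fun h1 => by
          simp only [Finset.mem_biUnion, Finset.mem_filter, id] at h1
          obtain ⟨C', ⟨hC', _⟩, h1C'⟩ := h1
          have := (hDsub C' hC' 1 h1C').1
          omega)] at hC2 hC3 ⊢
        obtain ⟨x, hx⟩ := hC2
        simp only [Finset.mem_biUnion, Finset.mem_filter, id] at hx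
        obtain ⟨C', ⟨hC', hjC'⟩, _⟩ := hx
        rw [Xblock hD hC' hjC']
        exact hC'
    · intro hC
      by_cases hjC : j ∈ C
      · refine ⟨Finset.mem_image.2 ⟨insert 1 ((D.filter (fun C => j ∈ C)).biUnion id),
          mem_glueC.2 (Or.inr (Or.inr rfl)), ?_⟩, ⟨j, hjC⟩, ?_⟩
        · rw [Xblock hD hC hjC]
          rw [Finset.erase_insert (fun h1 => by have := (hDsub C hC 1 h1).1; omega)]
        · intro x hx
          exact Finset.mem_Icc.2 (hDsub C hC x hx)
      · refine ⟨Finset.mem_image.2 ⟨C, mem_glueC.2 (Or.inr (Or.inl ⟨hC, hjC⟩)), ?_⟩,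
          hD.1 C hC, ?_⟩
        · exact Finset.erase_eq_of_notMem (fun h1 => by have := (hDsub C hC 1 h1).1; omega)
        · intro x hx
          exact Finset.mem_Icc.2 (hDsub C hC x hx)
  unfold splitP glueP
  rw [← hAdef, ← hDdef, hfil1, hfil2, hAdef, hDdef, unshiftP_shiftP, unshiftP_shiftP]

lemma glue_split {m j : ℕ} (hj2 : 2 ≤ j) (hjm : j ≤ m+2) {π : Finset (Finset ℕ)}
    (hπ : IsNC (m+1) π) (hJ : Jstat m π = j) :
    glueP j (splitP m j π).1 (splitP m j π).2 = π := by
  obtain ⟨B₀, hB₀, h1B₀, hBels, hjB₀, hdich, hbo⟩ := fiber_structure hπ hJ hj2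
  have h := isNC_iff.1 hπ
  have hF₁ := split_filter1 hπ hJ hj2 hjm
  have hF₂ := split_filter2 hπ hJ hj2 hjm
  set F₁ := π.filter (fun B => B ⊆ Finset.Icc 2 (j-1)) with hF₁def
  set F₂ := (π.image (fun B => B.erase 1)).filter
      (fun C => C.Nonempty ∧ C ⊆ Finset.Icc j (m+1)) with hF₂def
  have hc1 : shiftP 1 (unshiftP 1 F₁) = F₁ := by
    apply shiftP_unshiftP
    intro B hB x hx
    have := (hF₁.elem_bound B hB x hx).1
    omega
  have hc2 : shiftP (j-1) (unshiftP (j-1) F₂) = F₂ := by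
    apply shiftP_unshiftP
    intro B hB x hx
    have := (hF₂.elem_bound B hB x hx).1
    omega
  have hglue : glueP j (splitP m j π).1 (splitP m j π).2 = glueC j F₁ F₂ := by
    unfold glueP splitP
    rw [← hF₁def, ← hF₂def, hc1, hc2]
  rw [hglue]
  -- the attached block is B₀
  have hins : insert 1 ((F₂.filter (fun C => j ∈ C)).biUnion id) = B₀ := by
    rcases Nat.lt_or_ge (m+1) j with hj | hj
    · -- j = m + 2, B₀ = {1}
      have hF₂e : F₂ = ∅ := hF₂.eq_empty (by omega)
      have hB₀e : B₀ = {1} := by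
        apply Finset.Subset.antisymm
        · intro x hx
          rcases hBels x hx with h' | h'
          · simp [h']
          · have := h.elem_bound B₀ hB₀ x hx
            omega
        · intro x hx
          rw [Finset.mem_singleton] at hx
          exact hx ▸ h1B₀
      rw [hF₂e, hB₀e]
      simp
    · -- j ≤ m+1 : block of j in F₂ is B₀.erase 1
      have hjB := hjB₀ hj
      have hY : B₀.erase 1 ∈ F₂ := by
        rw [hF₂def, Finset.mem_filter]
        refine ⟨Finset.mem_image.2 ⟨B₀, hB₀, rfl⟩, ⟨j, Finset.mem_erase.2 ⟨by omega, hjB⟩⟩, ?_⟩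
        intro y hy
        obtain ⟨hy1, hy2⟩ := Finset.mem_erase.1 hy
        rcases hBels y hy2 with h' | h'
        · exact absurd h' hy1
        · exact Finset.mem_Icc.2 ⟨h', (h.elem_bound B₀ hB₀ y hy2).2⟩
      rw [Xblock hF₂ hY (Finset.mem_erase.2 ⟨by omega, hjB⟩)]
      exact Finset.insert_erase h1B₀
  -- final set equality
  ext E
  rw [mem_glueC, hins]
  constructor
  · rintro (hE | ⟨hE, hjE⟩ | hE)
    · exact Finset.filter_subset _ _ hE
    · rw [hF₂def, Finset.mem_filter] at hE
      obtain ⟨hE1, hE2, hE3⟩ := hE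
      obtain ⟨B, hB, rfl⟩ := Finset.mem_image.1 hE1
      by_cases hBB₀ : B = B₀
      · exfalso
        subst hBB₀
        rcases Nat.lt_or_ge (m+1) j with hj | hj
        · obtain ⟨x, hx⟩ := hE2
          have := Finset.mem_Icc.1 (hE3 hx)
          omega
        · exact hjE (Finset.mem_erase.2 ⟨by omega, hjB₀ hj⟩)
      · have h1B : (1:ℕ) ∉ B := fun h1 =>
          hBB₀ (block_eq_of_mem h hB hB₀ h1 h1B₀)
        rwa [Finset.erase_eq_of_notMem h1B]
    · exact hE ▸ hB₀
  · intro hE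
    by_cases hEB₀ : E = B₀
    · exact Or.inr (Or.inr hEB₀)
    · rcases hdich E hE hEB₀ with h' | h'
      · exact Or.inl (Finset.mem_filter.2 ⟨hE, h'⟩)
      · right; left
        have h1E : (1:ℕ) ∉ E := fun h1 => by
          have := Finset.mem_Icc.1 (h' h1)
          omega
        constructor
        · rw [hF₂def, Finset.mem_filter]
          exact ⟨Finset.mem_image.2 ⟨E, hE, Finset.erase_eq_of_notMem h1E⟩,
            h.1 E hE, h'⟩
        · intro hjE
          have hjm1 : j ≤ m + 1 := (Finset.mem_Icc.1 (h' hjE)).2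
          exact hEB₀ (block_eq_of_mem h hE hB₀ hjE (hjB₀ hjm1))
  
end Inverses

/-! ### Counting noncrossing partitions: Catalan numbers -/

section CatalanCount

lemma NCset_zero : NCset 0 = {∅} := by
  ext π
  rw [mem_NCset_iff, Finset.mem_singleton]
  constructor
  · intro h
    rw [Finset.eq_empty_iff_forall_notMem]
    intro B hB
    obtain ⟨x, hx⟩ := h.1 B hB
    have := blocks_subset h.2.1 hB hx
    simp only [Finset.mem_Icc] at this
    omega
  · rintro rfl
    refine ⟨fun E hE => absurd hE (Finset.notMem_empty E), ?_,
      fun E hE => absurd hE (Finset.notMem_empty E)⟩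
    rw [Finset.biUnion_empty]
    rw [Finset.Icc_eq_empty (by omega)]

lemma fiber_card (m j : ℕ) (hj : j ∈ Finset.Icc 2 (m+2)) :
    ((NCset (m+1)).filter (fun π => Jstat m π = j)).card
      = (NCset (j-2)).card * (NCset (m+2-j)).card := by
  obtain ⟨hj2, hjm⟩ := Finset.mem_Icc.1 hj
  rw [← Finset.card_product]
  apply Finset.card_bij' (i := fun π _ => splitP m j π)
    (j := fun p _ => glueP j p.1 p.2)
  · -- hi
    intro π hπ
    obtain ⟨hπ1, hπ2⟩ := Finset.mem_filter.1 hπ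
    have hNC := mem_NCset_iff.1 hπ1
    obtain ⟨hs1, hs2⟩ := split_mem hj2 hjm hNC hπ2
    exact Finset.mem_product.2 ⟨mem_NCset_iff.2 (isNC_iff.2 hs1), mem_NCset_iff.2 (isNC_iff.2 hs2)⟩
  · -- hj
    intro p hp
    obtain ⟨hp1, hp2⟩ := Finset.mem_product.1 hp
    have h₁ := isNC_iff.1 (mem_NCset_iff.1 hp1)
    have h₂ := isNC_iff.1 (mem_NCset_iff.1 hp2)
    obtain ⟨hA, hD⟩ := glue_shifts hj2 hjm h₁ h₂
    obtain ⟨hg1, hg2⟩ := glue_core hj2 hjm hA hD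
    exact Finset.mem_filter.2 ⟨mem_NCset_iff.2 hg1, hg2⟩
  · -- left inverse : glue (split π) = π
    intro π hπ
    obtain ⟨hπ1, hπ2⟩ := Finset.mem_filter.1 hπ
    exact glue_split hj2 hjm (mem_NCset_iff.1 hπ1) hπ2
  · -- right inverse : split (glue p) = p
    intro p hp
    obtain ⟨hp1, hp2⟩ := Finset.mem_product.1 hp
    have h₁ := isNC_iff.1 (mem_NCset_iff.1 hp1)
    have h₂ := isNC_iff.1 (mem_NCset_iff.1 hp2)
    exact split_glue hj2 hjm h₁ h₂

theorem NCset_card (m : ℕ) : (NCset m).card = catalan m := by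
  induction m using Nat.strong_induction_on with
  | _ m ih =>
    match m with
    | 0 =>
      rw [NCset_zero, Finset.card_singleton, catalan_zero]
    | Nat.succ k =>
      rw [Finset.card_eq_sum_card_fiberwise
        (f := Jstat k) (t := Finset.Icc 2 (k+2))
        (fun π hπ => Jstat_mem (mem_NCset_iff.1 hπ))]
      have hfib : ∀ j ∈ Finset.Icc 2 (k+2),
          ((NCset (k+1)).filter (fun π => Jstat k π = j)).card
            = catalan (j-2) * catalan (k+2-j) := by
        intro j hj
        obtain ⟨hj2, hjm⟩ := Finset.mem_Icc.1 hj
        rw [fiber_card k j hj, ih (j-2) (by omega), ih (k+2-j) (by omega)]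
      rw [Finset.sum_congr rfl hfib, catalan_succ k, Fin.sum_univ_eq_sum_range (fun i => catalan i * catalan (k - i)) (k+1)]
      refine Finset.sum_nbij' (i := fun j => j - 2) (j := fun i => i + 2)
        ?_ ?_ ?_ ?_ ?_
      · intro a ha
        obtain ⟨h1, h2⟩ := Finset.mem_Icc.1 ha
        exact Finset.mem_range.2 (by omega)
      · intro a ha
        have := Finset.mem_range.1 ha
        exact Finset.mem_Icc.2 ⟨by omega, by omega⟩
      · intro a ha
        have := Finset.mem_Icc.1 ha
        omega
      · intro a _
        omega
      · intro a ha
        obtain ⟨h1, h2⟩ := Finset.mem_Icc.1 ha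
        have he : k + 2 - a = k - (a - 2) := by omega
        rw [he]

end CatalanCount

/-! ### The block bijection: `phiB B = {min B} ∪ (B+1)`, `psiB E = (E \ {min E}) - 1` -/

section Blockmaps

def phiB (B : Finset ℕ) : Finset ℕ :=
  B.image (fun x => x + 1) ∪ B.filter (fun x => ∀ y ∈ B, x ≤ y)

def psiB (E : Finset ℕ) : Finset ℕ :=
  (E.filter (fun x => ∃ y ∈ E, y < x)).image (fun x => x - 1)

def phi (τ : Finset (Finset ℕ)) : Finset (Finset ℕ) := τ.image phiB

def psi (π : Finset (Finset ℕ)) : Finset (Finset ℕ) := π.image psiB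

lemma mem_phiB {x : ℕ} {B : Finset ℕ} :
    x ∈ phiB B ↔ (∃ y ∈ B, y + 1 = x) ∨ (x ∈ B ∧ ∀ y ∈ B, x ≤ y) := by
  simp only [phiB, Finset.mem_union, Finset.mem_image, Finset.mem_filter]

lemma phiB_of_min {m : ℕ} {B : Finset ℕ} (hm : IsMinOf m B) :
    phiB B = insert m (shiftF 1 B) := by
  ext x
  rw [mem_phiB, Finset.mem_insert, mem_shiftF]
  constructor
  · rintro (⟨y, hy, rfl⟩ | ⟨hx, hmin⟩)
    · exact Or.inr ⟨y, hy, rfl⟩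
    · exact Or.inl (le_antisymm (hmin m hm.1) (hm.2 x hx))
  · rintro (rfl | ⟨y, hy, rfl⟩)
    · exact Or.inr ⟨hm.1, hm.2⟩
    · exact Or.inl ⟨y, hy, rfl⟩

lemma mem_phiB_of_min {m x : ℕ} {B : Finset ℕ} (hm : IsMinOf m B) :
    x ∈ phiB B ↔ x = m ∨ ∃ y ∈ B, y + 1 = x := by
  rw [phiB_of_min hm, Finset.mem_insert, mem_shiftF]

lemma psiB_of_min {m : ℕ} {E : Finset ℕ} (hm : IsMinOf m E) :
    psiB E = unshiftF 1 (E.erase m) := by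
  unfold psiB unshiftF
  congr 1
  ext x
  rw [Finset.mem_filter, Finset.mem_erase]
  constructor
  · rintro ⟨hx, y, hy, hyx⟩
    refine ⟨?_, hx⟩
    intro he
    have := hm.2 y hy
    omega
  · rintro ⟨hxm, hx⟩
    refine ⟨hx, m, hm.1, ?_⟩
    have := hm.2 x hx
    omega

lemma minOf_phiB {m : ℕ} {B : Finset ℕ} (hm : IsMinOf m B) : IsMinOf m (phiB B) := by
  constructor
  · exact (mem_phiB_of_min hm).2 (Or.inl rfl)
  · intro y hy
    rcases (mem_phiB_of_min hm).1 hy with rfl | ⟨z, hz, rfl⟩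
    · exact le_refl _
    · have := hm.2 z hz; omega

lemma psiB_phiB {B : Finset ℕ} (hne : B.Nonempty) : psiB (phiB B) = B := by
  have hm : IsMinOf (B.min' hne) B := ⟨Finset.min'_mem _ _, fun j hj => Finset.min'_le _ j hj⟩
  rw [psiB_of_min (minOf_phiB hm), phiB_of_min hm]
  rw [Finset.erase_insert]
  · exact unshiftF_shiftF 1 B
  · rw [mem_shiftF]
    rintro ⟨y, hy, hc⟩
    have := hm.2 y hy
    omega

lemma phiB_psiB {m : ℕ} {E : Finset ℕ} (hm : IsMinOf m E) (hm1 : m + 1 ∈ E) :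
    phiB (psiB E) = E := by
  have hmS : IsMinOf m (psiB E) := by
    rw [psiB_of_min hm]
    constructor
    · simp only [unshiftF, Finset.mem_image]
      exact ⟨m + 1, Finset.mem_erase.2 ⟨by omega, hm1⟩, by omega⟩
    · intro z hz
      simp only [unshiftF, Finset.mem_image] at hz
      obtain ⟨x, hx, rfl⟩ := hz
      obtain ⟨hxm, hxE⟩ := Finset.mem_erase.1 hx
      have := hm.2 x hxE
      omega
  rw [phiB_of_min hmS, psiB_of_min hm, shiftF_unshiftF, Finset.insert_erase hm.1]
  intro x hx
  obtain ⟨hxm, hxE⟩ := Finset.mem_erase.1 hx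
  have := hm.2 x hxE
  by_contra h
  have hx0 : x = 0 := by omega
  have hm0 : m = 0 := by omega
  exact hxm (by omega)

lemma mem_psiB_of_min {m z : ℕ} {E : Finset ℕ} (hm : IsMinOf m E) (hpos : 1 ≤ m) :
    z ∈ psiB E ↔ z + 1 ∈ E ∧ m < z + 1 := by
  rw [psiB_of_min hm]
  simp only [unshiftF, Finset.mem_image]
  constructor
  · rintro ⟨x, hx, rfl⟩
    obtain ⟨hxm, hxE⟩ := Finset.mem_erase.1 hx
    have := hm.2 x hxE
    have hx1 : x - 1 + 1 = x := by omega
    rw [hx1]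
    exact ⟨hxE, by omega⟩
  · rintro ⟨hz, hmz⟩
    exact ⟨z + 1, Finset.mem_erase.2 ⟨by omega, hz⟩, by omega⟩

lemma phiB_lift {m x : ℕ} {B : Finset ℕ} (hm : IsMinOf m B) (hx : x ∈ phiB B) :
    ∃ x' ∈ B, x' ≤ x ∧ x ≤ x' + 1 := by
  rcases (mem_phiB_of_min hm).1 hx with rfl | ⟨y, hy, rfl⟩
  · exact ⟨x, hm.1, le_refl x, by omega⟩
  · exact ⟨y, hy, by omega, le_refl _⟩

end Blockmaps

/-! ### Structure of noncrossing linked partitions generating the full partition -/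

section NCLstruct

variable {n : ℕ} {π : Finset (Finset ℕ)}

/-- L1: no singleton blocks. -/
lemma ncl_card (hn : 2 ≤ n) (hπ : IsNCL n π)
    (hgen : GeneratesNC n π {Finset.Icc 1 n}) :
    ∀ E ∈ π, 1 < E.card := by
  intro E hE
  rcases Nat.lt_or_ge 1 E.card with h | h
  · exact h
  exfalso
  have hcard : E.card = 1 := by
    obtain ⟨x, hx⟩ := hπ.1 E hE
    have := Finset.card_pos.2 ⟨x, hx⟩
    omega
  obtain ⟨k, rfl⟩ := Finset.card_eq_one.1 hcard
  have hkn : k ∈ Finset.Icc 1 n := blocks_subset hπ.2.1 hE (Finset.mem_singleton_self k)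
  have hkn' := Finset.mem_Icc.1 hkn
  -- k belongs to no other block
  have huniq : ∀ F ∈ π, F ≠ {k} → k ∉ F := by
    intro F hF hne hkF
    have hnd := (hπ.2.2 {k} hE F hF (Ne.symm hne)).2 k
      (Finset.mem_inter.2 ⟨Finset.mem_singleton_self k, hkF⟩)
    have hmin : IsMinOf k {k} := ⟨Finset.mem_singleton_self k,
      fun j hj => le_of_eq (Finset.mem_singleton.1 hj).symm⟩
    rcases hnd with ⟨_, hc, _⟩ | ⟨hc, _, _⟩
    · rw [Finset.card_singleton] at hc; omega
    · exact hc hmin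
  -- the witness partition
  set w : ℕ := if k = 1 then 2 else 1 with hwdef
  have hwI : w ∈ Finset.Icc 1 n := by
    rw [Finset.mem_Icc, hwdef]
    split_ifs <;> omega
  have hwk : w ≠ k := by
    rw [hwdef]
    split_ifs with h' <;> omega
  set τ₀ : Finset (Finset ℕ) := insert {k} {Finset.Icc 1 n \ {k}} with hτ₀def
  have hmem₀ : ∀ T, T ∈ τ₀ ↔ T = {k} ∨ T = Finset.Icc 1 n \ {k} := by
    intro T
    simp only [hτ₀def, Finset.mem_insert, Finset.mem_singleton]
  have hNC₀ : IsNC n τ₀ := by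
    refine ⟨?_, ?_, ?_⟩
    · intro T hT
      rcases (hmem₀ T).1 hT with rfl | rfl
      · exact ⟨k, Finset.mem_singleton_self k⟩
      · exact ⟨w, Finset.mem_sdiff.2 ⟨hwI, by simpa using hwk⟩⟩
    · ext x
      simp only [Finset.mem_biUnion, id]
      constructor
      · rintro ⟨T, hT, hxT⟩
        rcases (hmem₀ T).1 hT with rfl | rfl
        · rw [Finset.mem_singleton.1 hxT]; exact hkn
        · exact (Finset.mem_sdiff.1 hxT).1
      · intro hx
        by_cases hxk : x = k
        · exact ⟨{k}, (hmem₀ _).2 (Or.inl rfl), by simp [hxk]⟩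
        · exact ⟨Finset.Icc 1 n \ {k}, (hmem₀ _).2 (Or.inr rfl),
            Finset.mem_sdiff.2 ⟨hx, by simpa using hxk⟩⟩
    · intro T hT S hS hTS
      have hds : Disjoint ({k} : Finset ℕ) (Finset.Icc 1 n \ {k}) := by
        rw [Finset.disjoint_left]
        intro x hx hx'
        exact (Finset.mem_sdiff.1 hx').2 hx
      rcases (hmem₀ T).1 hT with rfl | rfl <;> rcases (hmem₀ S).1 hS with rfl | rfl
      · exact absurd rfl hTS
      · exact ⟨hds, not_crossing_singleton_left⟩
      · exact ⟨hds.symm, not_crossing_singleton_right⟩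
      · exact absurd rfl hTS
  have hle₀ : NCLle π τ₀ := by
    intro F hF
    by_cases hFk : F = {k}
    · exact ⟨{k}, (hmem₀ _).2 (Or.inl rfl), hFk ▸ Finset.Subset.refl _⟩
    · refine ⟨Finset.Icc 1 n \ {k}, (hmem₀ _).2 (Or.inr rfl), ?_⟩
      intro x hx
      refine Finset.mem_sdiff.2 ⟨blocks_subset hπ.2.1 hF hx, ?_⟩
      rw [Finset.mem_singleton]
      intro he
      exact huniq F hF hFk (he ▸ hx)
  obtain ⟨T, hT, hsub⟩ := hgen.2.2 τ₀ hNC₀ hle₀ (Finset.Icc 1 n) (Finset.mem_singleton_self _)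
  rcases (hmem₀ T).1 hT with rfl | rfl
  · have h1 : w ∈ ({k} : Finset ℕ) := hsub hwI
    exact hwk (Finset.mem_singleton.1 h1)
  · have h1 : k ∈ Finset.Icc 1 n \ {k} := hsub hkn
    exact (Finset.mem_sdiff.1 h1).2 (Finset.mem_singleton_self k)

/-- L3: every `k ≥ 2` is a non-minimal element of some block. -/
lemma ncl_cover (hn : 2 ≤ n) (hπ : IsNCL n π)
    (hgen : GeneratesNC n π {Finset.Icc 1 n}) :
    ∀ k, 2 ≤ k → k ≤ n → ∃ F ∈ π, k ∈ F ∧ ∃ y ∈ F, y < k := by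
  intro k hk2 hkn
  by_contra hcon
  push_neg at hcon
  have hmin : ∀ F ∈ π, k ∈ F → ∀ y ∈ F, k ≤ y := by
    intro F hF hkF y hy
    by_contra hlt
    exact absurd (hcon F hF hkF y hy) (by omega)
  have hbiu := hπ.2.1
  obtain ⟨E, hE, hkE⟩ : ∃ E ∈ π, k ∈ E := by
    have : k ∈ π.biUnion id := hbiu ▸ Finset.mem_Icc.2 ⟨by omega, hkn⟩
    simpa using this
  have huniq : ∀ F ∈ π, k ∈ F → F = E := by
    intro F hF hkF
    by_contra hne
    have hnd := (hπ.2.2 F hF E hE hne).2 k (Finset.mem_inter.2 ⟨hkF, hkE⟩)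
    rcases hnd with ⟨_, _, hc⟩ | ⟨hc, _, _⟩
    · exact hc ⟨hkE, hmin E hE hkE⟩
    · exact hc ⟨hkF, hmin F hF hkF⟩
  -- bad elements
  set S : Finset ℕ := (Finset.Icc (k+1) n).filter
    (fun b => ∃ F ∈ π, b ∈ F ∧ ∃ a ∈ F, a < k) with hSdef
  set M : ℕ := if h : S.Nonempty then S.min' h - 1 else n with hMdef
  have hSmem : ∀ b ∈ S, (k + 1 ≤ b ∧ b ≤ n) ∧ ∃ F ∈ π, b ∈ F ∧ ∃ a ∈ F, a < k := by
    intro b hb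
    rw [hSdef, Finset.mem_filter, Finset.mem_Icc] at hb
    exact hb
  have hkM : k ≤ M ∧ M ≤ n := by
    rw [hMdef]
    split_ifs with h
    · have := (hSmem _ (Finset.min'_mem S h)).1
      omega
    · omega
  have hMS : ∀ b ∈ S, M < b := by
    intro b hb
    have hne : S.Nonempty := ⟨b, hb⟩
    rw [hMdef, dif_pos hne]
    have := Finset.min'_le S b hb
    have := (hSmem _ (Finset.min'_mem S hne)).1
    omega
  -- closedness
  have hlow : ∀ B ∈ π, ∀ y ∈ B, k ≤ y → y ≤ M → ∀ z ∈ B, k ≤ z := by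
    intro B hB y hy hky hyM z hz
    by_contra hzk
    push_neg at hzk
    rcases Nat.lt_or_ge k y with hky' | hky'
    · -- y > k : y is a bad element, contradiction with y ≤ M
      have hyS : y ∈ S := by
        rw [hSdef, Finset.mem_filter, Finset.mem_Icc]
        have := Finset.mem_Icc.1 (blocks_subset hbiu hB hy)
        exact ⟨⟨by omega, this.2⟩, B, hB, hy, z, hz, hzk⟩
      have := hMS y hyS
      omega
    · -- y = k, so B = E, contradicting minimality of k in E
      have hyk : y = k := by omega
      have hBE : B = E := huniq B hB (hyk ▸ hy)
      have := hmin E hE hkE z (hBE ▸ hz)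
      omega
  have hclosed : ∀ B ∈ π, ∀ y ∈ B, k ≤ y → y ≤ M → ∀ z ∈ B, k ≤ z ∧ z ≤ M := by
    intro B hB y hy hky hyM z hz
    refine ⟨hlow B hB y hy hky hyM z hz, ?_⟩
    by_contra hzM
    push_neg at hzM
    by_cases hS : S.Nonempty
    · set β : ℕ := S.min' hS with hβdef
      have hβS : β ∈ S := Finset.min'_mem S hS
      obtain ⟨⟨hβ1, hβ2⟩, F, hF, hβF, a, haF, hak⟩ := hSmem β hβS
      have hMβ : M = β - 1 := by rw [hMdef, dif_pos hS]
      have hBF : B ≠ F := by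
        intro he
        have := hlow B hB y hy hky hyM a (he ▸ haF)
        omega
      rcases Nat.lt_or_ge β z with hβz | hβz
      · -- crossing F B with (a, y, β, z)
        exact (hπ.2.2 F hF B hB (Ne.symm hBF)).1
          ⟨a, haF, β, hβF, y, hy, z, hz, by omega, by omega, hβz⟩
      · -- z = β : nearly disjointness fails at β
        have hzβ : z = β := by omega
        have hnd := (hπ.2.2 B hB F hF hBF).2 β
          (Finset.mem_inter.2 ⟨hzβ ▸ hz, hβF⟩)
        rcases hnd with ⟨hc, _, _⟩ | ⟨_, hc, _⟩
        · have := hc.2 y hy; omega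
        · have := hc.2 a haF; omega
    · -- S empty: M = n
      have hMn : M = n := by rw [hMdef, dif_neg hS]
      have := Finset.mem_Icc.1 (blocks_subset hbiu hB hz)
      omega
  -- witness partition
  set τ₁ : Finset (Finset ℕ) := insert (Finset.Icc k M) {Finset.Icc 1 n \ Finset.Icc k M}
    with hτ₁def
  have hmem₁ : ∀ T, T ∈ τ₁ ↔ T = Finset.Icc k M ∨ T = Finset.Icc 1 n \ Finset.Icc k M := by
    intro T
    simp only [hτ₁def, Finset.mem_insert, Finset.mem_singleton]
  have hdisj : Disjoint (Finset.Icc k M) (Finset.Icc 1 n \ Finset.Icc k M) := by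
    rw [Finset.disjoint_left]
    intro x hx hx'
    exact (Finset.mem_sdiff.1 hx').2 hx
  have hNC₁ : IsNC n τ₁ := by
    refine ⟨?_, ?_, ?_⟩
    · intro T hT
      rcases (hmem₁ T).1 hT with rfl | rfl
      · exact ⟨k, Finset.mem_Icc.2 ⟨le_refl k, hkM.1⟩⟩
      · exact ⟨1, Finset.mem_sdiff.2 ⟨Finset.mem_Icc.2 ⟨le_refl 1, by omega⟩,
          fun h => by have := Finset.mem_Icc.1 h; omega⟩⟩
    · ext x
      simp only [Finset.mem_biUnion, id]
      constructor
      · rintro ⟨T, hT, hxT⟩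
        rcases (hmem₁ T).1 hT with rfl | rfl
        · have := Finset.mem_Icc.1 hxT
          exact Finset.mem_Icc.2 ⟨by omega, by omega⟩
        · exact (Finset.mem_sdiff.1 hxT).1
      · intro hx
        by_cases hxI : x ∈ Finset.Icc k M
        · exact ⟨Finset.Icc k M, (hmem₁ _).2 (Or.inl rfl), hxI⟩
        · exact ⟨_, (hmem₁ _).2 (Or.inr rfl), Finset.mem_sdiff.2 ⟨hx, hxI⟩⟩
    · intro T hT U hU hTU
      have hsd : ∀ x ∈ Finset.Icc 1 n \ Finset.Icc k M, x ∉ Finset.Icc k M :=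
        fun x hx => (Finset.mem_sdiff.1 hx).2
      rcases (hmem₁ T).1 hT with rfl | rfl <;> rcases (hmem₁ U).1 hU with rfl | rfl
      · exact absurd rfl hTU
      · exact ⟨hdisj, not_crossing_Icc_left hsd⟩
      · exact ⟨hdisj.symm, not_crossing_Icc_right hsd⟩
      · exact absurd rfl hTU
  have hle₁ : NCLle π τ₁ := by
    intro B hB
    by_cases hint : ∃ y ∈ B, k ≤ y ∧ y ≤ M
    · obtain ⟨y, hy, h1, h2⟩ := hint
      refine ⟨Finset.Icc k M, (hmem₁ _).2 (Or.inl rfl), ?_⟩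
      intro z hz
      exact Finset.mem_Icc.2 (hclosed B hB y hy h1 h2 z hz)
    · refine ⟨_, (hmem₁ _).2 (Or.inr rfl), ?_⟩
      intro z hz
      refine Finset.mem_sdiff.2 ⟨blocks_subset hbiu hB hz, ?_⟩
      intro hzI
      have := Finset.mem_Icc.1 hzI
      exact hint ⟨z, hz, this⟩
  obtain ⟨T, hT, hsub⟩ := hgen.2.2 τ₁ hNC₁ hle₁ (Finset.Icc 1 n) (Finset.mem_singleton_self _)
  rcases (hmem₁ T).1 hT with rfl | rfl
  · have h1 : (1:ℕ) ∈ Finset.Icc k M := hsub (Finset.mem_Icc.2 ⟨le_refl 1, by omega⟩)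
    have := Finset.mem_Icc.1 h1
    omega
  · have h1 : k ∈ Finset.Icc 1 n \ Finset.Icc k M :=
      hsub (Finset.mem_Icc.2 ⟨by omega, hkn⟩)
    exact (Finset.mem_sdiff.1 h1).2 (Finset.mem_Icc.2 ⟨le_refl k, hkM.1⟩)

/-- L2: the successor of the minimum of each block lies in the block. -/
lemma ncl_succ_min (hn : 2 ≤ n) (hπ : IsNCL n π)
    (hgen : GeneratesNC n π {Finset.Icc 1 n}) :
    ∀ E ∈ π, ∀ m, IsMinOf m E → m + 1 ∈ E := by
  intro E hE m hm
  by_contra hm1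
  obtain ⟨e, he, hem⟩ := Finset.exists_mem_ne (ncl_card hn hπ hgen E hE) m
  have hme : m < e := by
    have := hm.2 e he
    omega
  have hee : m + 2 ≤ e := by
    rcases Nat.lt_or_ge (m+1) e with h | h
    · omega
    · have : e = m + 1 := by omega
      exact absurd (this ▸ he) hm1
  have hbnd := Finset.mem_Icc.1 (blocks_subset hπ.2.1 hE he)
  have hbndm := Finset.mem_Icc.1 (blocks_subset hπ.2.1 hE hm.1)
  obtain ⟨F, hF, hkF, y, hyF, hy⟩ := ncl_cover hn hπ hgen (m+1) (by omega) (by omega)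
  have hne : E ≠ F := fun h => hm1 (h ▸ hkF)
  -- find f' ∈ F with f' < m
  obtain ⟨f', hf', hfm⟩ : ∃ f' ∈ F, f' < m := by
    rcases Nat.lt_or_ge y m with h | h
    · exact ⟨y, hyF, h⟩
    · have hym : y = m := by omega
      have hnd := (hπ.2.2 E hE F hF hne).2 m
        (Finset.mem_inter.2 ⟨hm.1, hym ▸ hyF⟩)
      rcases hnd with ⟨_, _, hc⟩ | ⟨hc, _, _⟩
      · by_contra hcon
        push_neg at hcon
        exact hc ⟨hym ▸ hyF, fun j hj => by
          by_contra hj'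
          push_neg at hj'
          exact absurd (hcon j hj) (by omega)⟩
      · exact absurd ⟨hm.1, hm.2⟩ hc
  -- crossing F E via (f', m, m+1, e)
  exact (hπ.2.2 F hF E hE (Ne.symm hne)).1
    ⟨f', hf', m + 1, hkF, m, hm.1, e, he, hfm, by omega, by omega⟩

end NCLstruct

/-! ### The bijection between `NCL⁽¹⁾(n)` and `NC(n-1)` -/

section MainBij

variable {n : ℕ} {π τ : Finset (Finset ℕ)}

lemma psi_mem (hn : 2 ≤ n) (hπ : IsNCL n π)
    (hgen : GeneratesNC n π {Finset.Icc 1 n}) : IsNC (n-1) (psi π) := by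
  have hblock : ∀ E ∈ π, ∃ m, IsMinOf m E ∧ 1 ≤ m ∧ m + 1 ∈ E := by
    intro E hE
    have hne := hπ.1 E hE
    have hm : IsMinOf (E.min' hne) E :=
      ⟨Finset.min'_mem _ _, fun j hj => Finset.min'_le _ j hj⟩
    have h1 := Finset.mem_Icc.1 (blocks_subset hπ.2.1 hE hm.1)
    exact ⟨E.min' hne, hm, h1.1, ncl_succ_min hn hπ hgen E hE _ hm⟩
  have hbnd : ∀ E ∈ π, ∀ x ∈ E, 1 ≤ x ∧ x ≤ n := by
    intro E hE x hx
    exact Finset.mem_Icc.1 (blocks_subset hπ.2.1 hE hx)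
  refine ⟨?_, ?_, ?_⟩
  · intro E' hE'
    obtain ⟨E, hE, rfl⟩ := Finset.mem_image.1 hE'
    obtain ⟨m, hm, h1, hm1⟩ := hblock E hE
    exact ⟨m, (mem_psiB_of_min hm h1).2 ⟨hm1, by omega⟩⟩
  · ext z
    simp only [Finset.mem_biUnion, id, Finset.mem_Icc]
    constructor
    · rintro ⟨E', hE', hz⟩
      obtain ⟨E, hE, rfl⟩ := Finset.mem_image.1 hE'
      obtain ⟨m, hm, h1, _⟩ := hblock E hE
      obtain ⟨hz1, hz2⟩ := (mem_psiB_of_min hm h1).1 hz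
      have := hbnd E hE _ hz1
      omega
    · intro hz
      obtain ⟨F, hF, hzF, y, hyF, hy⟩ := ncl_cover hn hπ hgen (z+1) (by omega) (by omega)
      obtain ⟨m, hm, h1, _⟩ := hblock F hF
      have hmy := hm.2 y hyF
      exact ⟨psiB F, Finset.mem_image.2 ⟨F, hF, rfl⟩,
        (mem_psiB_of_min hm h1).2 ⟨hzF, by omega⟩⟩
  · intro E' hE' F' hF' hEF'
    obtain ⟨E, hE, rfl⟩ := Finset.mem_image.1 hE'
    obtain ⟨F, hF, rfl⟩ := Finset.mem_image.1 hF'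
    have hEF : E ≠ F := fun h => hEF' (by rw [h])
    obtain ⟨mE, hmE, h1E, _⟩ := hblock E hE
    obtain ⟨mF, hmF, h1F, _⟩ := hblock F hF
    constructor
    · rw [Finset.disjoint_left]
      intro z hzE hzF
      obtain ⟨hz1, hz2⟩ := (mem_psiB_of_min hmE h1E).1 hzE
      obtain ⟨hz3, hz4⟩ := (mem_psiB_of_min hmF h1F).1 hzF
      have hnd := (hπ.2.2 E hE F hF hEF).2 (z+1) (Finset.mem_inter.2 ⟨hz1, hz3⟩)
      rcases hnd with ⟨hc, _, _⟩ | ⟨_, hc, _⟩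
      · have := hc.2 mE hmE.1; omega
      · have := hc.2 mF hmF.1; omega
    · rintro ⟨i1, hi1, i2, hi2, j1, hj1, j2, hj2, l1, l2, l3⟩
      obtain ⟨a1, -⟩ := (mem_psiB_of_min hmE h1E).1 hi1
      obtain ⟨a2, -⟩ := (mem_psiB_of_min hmE h1E).1 hi2
      obtain ⟨b1, -⟩ := (mem_psiB_of_min hmF h1F).1 hj1
      obtain ⟨b2, -⟩ := (mem_psiB_of_min hmF h1F).1 hj2
      exact (hπ.2.2 E hE F hF hEF).1
        ⟨i1+1, a1, i2+1, a2, j1+1, b1, j2+1, b2, by omega, by omega, by omega⟩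

lemma phi_mem (hn : 2 ≤ n) (hτ : IsNC (n-1) τ) :
    IsNCL n (phi τ) ∧ GeneratesNC n (phi τ) {Finset.Icc 1 n} := by
  have hbnd : ∀ B ∈ τ, ∀ x ∈ B, 1 ≤ x ∧ x ≤ n - 1 := by
    intro B hB x hx
    exact Finset.mem_Icc.1 (blocks_subset hτ.2.1 hB hx)
  have hblock : ∀ B ∈ τ, ∃ m, IsMinOf m B ∧ 1 ≤ m ∧ m ≤ n - 1 := by
    intro B hB
    have hne := hτ.1 B hB
    have hm : IsMinOf (B.min' hne) B :=
      ⟨Finset.min'_mem _ _, fun j hj => Finset.min'_le _ j hj⟩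
    have h1 := hbnd B hB _ hm.1
    exact ⟨B.min' hne, hm, h1.1, h1.2⟩
  have hsubIcc : ∀ B ∈ τ, phiB B ⊆ Finset.Icc 1 n := by
    intro B hB x hx
    obtain ⟨m, hm, h1, h2⟩ := hblock B hB
    rcases (mem_phiB_of_min hm).1 hx with rfl | ⟨y, hy, rfl⟩
    · exact Finset.mem_Icc.2 ⟨h1, by omega⟩
    · have := hbnd B hB y hy
      exact Finset.mem_Icc.2 ⟨by omega, by omega⟩
  have hNCL : IsNCL n (phi τ) := by
    refine ⟨?_, ?_, ?_⟩
    · intro E' hE'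
      obtain ⟨B, hB, rfl⟩ := Finset.mem_image.1 hE'
      obtain ⟨m, hm, _, _⟩ := hblock B hB
      exact ⟨m, (minOf_phiB hm).1⟩
    · ext x
      simp only [Finset.mem_biUnion, id]
      constructor
      · rintro ⟨E', hE', hx⟩
        obtain ⟨B, hB, rfl⟩ := Finset.mem_image.1 hE'
        exact hsubIcc B hB hx
      · intro hx
        have hx' := Finset.mem_Icc.1 hx
        by_cases hx1 : x = 1
        · obtain ⟨B, hB, h1B⟩ := exists_block (isNC_iff.1 hτ)
            (Finset.mem_Icc.2 ⟨le_refl 1, by omega⟩)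
          obtain ⟨m, hm, h1, _⟩ := hblock B hB
          have hm1 : m = 1 := le_antisymm (hm.2 1 h1B) h1
          exact ⟨phiB B, Finset.mem_image.2 ⟨B, hB, rfl⟩,
            (mem_phiB_of_min hm).2 (Or.inl (by omega))⟩
        · obtain ⟨B, hB, hyB⟩ := exists_block (isNC_iff.1 hτ)
            (Finset.mem_Icc.2 (⟨by omega, by omega⟩ : 1 ≤ x - 1 ∧ x - 1 ≤ n - 1))
          obtain ⟨m, hm, _, _⟩ := hblock B hB
          exact ⟨phiB B, Finset.mem_image.2 ⟨B, hB, rfl⟩,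
            (mem_phiB_of_min hm).2 (Or.inr ⟨x - 1, hyB, by omega⟩)⟩
    · intro E' hE' F' hF' hEF'
      obtain ⟨B, hB, rfl⟩ := Finset.mem_image.1 hE'
      obtain ⟨C, hC, rfl⟩ := Finset.mem_image.1 hF'
      have hBC : B ≠ C := fun h => hEF' (by rw [h])
      obtain ⟨mB, hmB, h1B, _⟩ := hblock B hB
      obtain ⟨mC, hmC, h1C, _⟩ := hblock C hC
      have hdisj := (hτ.2.2 B hB C hC hBC).1
      have hne : ∀ a ∈ B, ∀ b ∈ C, a ≠ b := by
        intro a ha b hb he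
        exact Finset.disjoint_left.1 hdisj ha (he ▸ hb)
      constructor
      · -- no crossing
        rintro ⟨i1, hi1, i2, hi2, j1, hj1, j2, hj2, l1, l2, l3⟩
        obtain ⟨a1, ha1, ha1'⟩ := phiB_lift hmB hi1
        obtain ⟨a2, ha2, ha2'⟩ := phiB_lift hmB hi2
        obtain ⟨b1, hb1, hb1'⟩ := phiB_lift hmC hj1
        obtain ⟨b2, hb2, hb2'⟩ := phiB_lift hmC hj2
        have k1 := hne a1 ha1 b1 hb1
        have k2 := hne a2 ha2 b1 hb1
        have k3 := hne a2 ha2 b2 hb2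
        exact (hτ.2.2 B hB C hC hBC).2
          ⟨a1, ha1, a2, ha2, b1, hb1, b2, hb2, by omega, by omega, by omega⟩
      · -- nearly disjoint
        intro x hx
        obtain ⟨hxB, hxC⟩ := Finset.mem_inter.1 hx
        have hcard : 1 < (phiB B).card := by
          rw [Finset.one_lt_card]
          refine ⟨mB, (minOf_phiB hmB).1, mB + 1,
            (mem_phiB_of_min hmB).2 (Or.inr ⟨mB, hmB.1, rfl⟩), by omega⟩
        have hcard' : 1 < (phiB C).card := by
          rw [Finset.one_lt_card]
          refine ⟨mC, (minOf_phiB hmC).1, mC + 1,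
            (mem_phiB_of_min hmC).2 (Or.inr ⟨mC, hmC.1, rfl⟩), by omega⟩
        rcases (mem_phiB_of_min hmB).1 hxB with rfl | ⟨b, hb, rfl⟩
        · rcases (mem_phiB_of_min hmC).1 hxC with he | ⟨c, hc, hce⟩
          · exact absurd he (hne _ hmB.1 _ hmC.1)
          · -- x = mB = c + 1 : min of phiB B, not min of phiB C
            left
            refine ⟨minOf_phiB hmB, hcard, ?_⟩
            intro hmin
            have h1 := hmin.2 mC (minOf_phiB hmC).1
            have h2 := hmC.2 c hc
            omega
        · rcases (mem_phiB_of_min hmC).1 hxC with he | ⟨c, hc, hce⟩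
          · -- x = b + 1 = mC
            right
            refine ⟨?_, he ▸ minOf_phiB hmC, hcard'⟩
            intro hmin
            have h1 := hmin.2 mB (minOf_phiB hmB).1
            have h2 := hmB.2 b hb
            omega
          · exact absurd (by omega : b = c) (hne b hb c hc)
  refine ⟨hNCL, ?_, ?_, ?_⟩
  · -- {Icc 1 n} is NC
    refine ⟨?_, ?_, ?_⟩
    · intro T hT
      rw [Finset.mem_singleton] at hT
      exact ⟨1, hT ▸ Finset.mem_Icc.2 ⟨le_refl 1, by omega⟩⟩
    · ext x
      simp only [Finset.mem_biUnion, Finset.mem_singleton, id]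
      constructor
      · rintro ⟨T, rfl, hx⟩; exact hx
      · intro hx; exact ⟨Finset.Icc 1 n, rfl, hx⟩
    · intro T hT S hS hTS
      rw [Finset.mem_singleton] at hT hS
      exact absurd (hT.trans hS.symm) hTS
  · -- phi τ ≤ {Icc 1 n}
    intro E' hE'
    obtain ⟨B, hB, rfl⟩ := Finset.mem_image.1 hE'
    exact ⟨Finset.Icc 1 n, Finset.mem_singleton_self _, hsubIcc B hB⟩
  · -- minimality
    intro σ hσ hle I hI
    rw [Finset.mem_singleton] at hI
    subst hI
    have hσ' := isNC_iff.1 hσ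
    obtain ⟨T, hT, h1T⟩ := exists_block hσ' (Finset.mem_Icc.2 ⟨le_refl 1, by omega⟩)
    have key : ∀ x, 1 ≤ x → x ≤ n → x ∈ T := by
      intro x
      induction x using Nat.strong_induction_on with
      | _ x ih =>
        intro h1 h2
        by_cases hx1 : x = 1
        · exact hx1 ▸ h1T
        · obtain ⟨B, hB, hyB⟩ := exists_block (isNC_iff.1 hτ)
            (Finset.mem_Icc.2 (⟨by omega, by omega⟩ : 1 ≤ x - 1 ∧ x - 1 ≤ n - 1))
          obtain ⟨T', hT', hsubT⟩ := hle (phiB B) (Finset.mem_image.2 ⟨B, hB, rfl⟩)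
          obtain ⟨m, hm, hm1, hmn⟩ := hblock B hB
          have hxφ : x ∈ phiB B := (mem_phiB_of_min hm).2 (Or.inr ⟨x - 1, hyB, by omega⟩)
          have hmφ : m ∈ phiB B := (minOf_phiB hm).1
          have hmy : m ≤ x - 1 := hm.2 _ hyB
          have hmT : m ∈ T := ih m (by omega) hm1 (by omega)
          have hTT' : T = T' := block_eq_of_mem hσ' hT hT' hmT (hsubT hmφ)
          exact hTT' ▸ hsubT hxφ
    exact ⟨T, hT, fun x hx => key x (Finset.mem_Icc.1 hx).1 (Finset.mem_Icc.1 hx).2⟩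

lemma psi_phi (hτ : IsNC (n-1) τ) : psi (phi τ) = τ := by
  unfold psi phi
  rw [Finset.image_image]
  exact (Finset.image_congr (fun B hB => psiB_phiB (hτ.1 B hB))).trans Finset.image_id

lemma phi_psi (hn : 2 ≤ n) (hπ : IsNCL n π)
    (hgen : GeneratesNC n π {Finset.Icc 1 n}) : phi (psi π) = π := by
  unfold psi phi
  rw [Finset.image_image]
  refine (Finset.image_congr ?_).trans Finset.image_id
  intro E hE
  have hne := hπ.1 E hE
  have hm : IsMinOf (E.min' hne) E :=
    ⟨Finset.min'_mem _ _, fun j hj => Finset.min'_le _ j hj⟩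
  exact phiB_psiB hm (ncl_succ_min hn hπ hgen E hE _ hm)

lemma NCLone_card (hn : 2 ≤ n) : (NCLone n).card = (NCset (n-1)).card := by
  apply Finset.card_bij' (i := fun π _ => psi π) (j := fun τ _ => phi τ)
  · intro π hπ
    obtain ⟨h1, h2⟩ := mem_NCLone_iff.1 hπ
    exact mem_NCset_iff.2 (psi_mem hn h1 h2)
  · intro τ hτ
    obtain ⟨h1, h2⟩ := phi_mem hn (mem_NCset_iff.1 hτ)
    exact mem_NCLone_iff.2 ⟨h1, h2⟩
  · intro π hπ
    obtain ⟨h1, h2⟩ := mem_NCLone_iff.1 hπ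
    exact phi_psi hn h1 h2
  · intro τ hτ
    exact psi_phi (mem_NCset_iff.1 hτ)

end MainBij

/-- For `n ≥ 2`, `NCL⁽¹⁾(n)` is in bijection with the set `NC(n-1)` of noncrossing
partitions of `{1,...,n-1}`; in particular its cardinality is the Catalan number
`c_{n-1}`. -/
theorem NCLone_equiv_NC (n : ℕ) (hn : 2 ≤ n) :
    Nonempty ({π // π ∈ NCLone n} ≃ {τ // τ ∈ NCset (n - 1)}) ∧
    (NCLone n).card = catalan (n - 1) := by
  have h := NCLone_card hn
  exact ⟨⟨Finset.equivOfCardEq h⟩, h.trans (NCset_card (n-1))⟩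
end
end
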